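/- arXiv:1606.02328 — 4 statements merged into one kernel-verified Lean document; each statement's English description precedes it below -/
import Mathlib

section
/- Let T be T₁(k) or T₂(k), and let X, Y ⊆ ℝ² be finite sets in general position, each with exactly k convex layers, admitting nested labelings ψ_X of X and ψ_Y of Y into T (both of the same type), each of which is both an internal separation and an external separation. Then the bijection f = ψ_Y⁻¹ ∘ ψ_X : X → Y satisfies: for all pairwise distinct a, b, c ∈ X, orient(a,b,c) > 0 if and only if orient(f(a), f(b), f(c)) > 0. In other words, the order type of such a point set is completely determined by the tree T. -/
open Set

noncomputable section

/-- Points of the plane. -/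
abbrev Pt : Type := ℝ × ℝ

/-- The orientation determinant of the triple `(a, b, c)`:
`c` lies strictly to the left of the directed line from `a` to `b` iff `orient a b c > 0`. -/
def orient (a b c : Pt) : ℝ :=
  (b.1 - a.1) * (c.2 - a.2) - (b.2 - a.2) * (c.1 - a.1)

/-- A set of points is in general position if no three pairwise distinct points are collinear. -/
def GenPos (X : Set Pt) : Prop :=
  ∀ a ∈ X, ∀ b ∈ X, ∀ c ∈ X, a ≠ b → a ≠ c → b ≠ c → orient a b c ≠ 0

/-- The set of extreme points of the convex hull of `S`. -/
def extremePts (S : Set Pt) : Set Pt := Set.extremePoints ℝ (convexHull ℝ S)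

/-- Remove the extreme points of the convex hull (one peeling step of convex layers). -/
def peel (S : Set Pt) : Set Pt := S \ extremePts S

/-- `X` has exactly `k` convex layers. -/
def HasLayers (X : Set Pt) (k : ℕ) : Prop :=
  peel^[k] X = ∅ ∧ ∀ j < k, peel^[j] X ≠ ∅

/-- `X_j`, the union of the `j` innermost convex layers (when `X` has `k` layers). -/
def layerSub (X : Set Pt) (k j : ℕ) : Set Pt := peel^[k - j] X

/-- `R_j`, the `j`-th convex layer of `X` (when `X` has `k` layers), `R_1` innermost. -/
def layer (X : Set Pt) (k j : ℕ) : Set Pt := extremePts (layerSub X k j)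

/-- `X` is a nested almost convex set. -/
def IsNACS (X : Set Pt) : Prop :=
  X.Finite ∧ X.Nonempty ∧ GenPos X ∧
  ∀ k, HasLayers X k →
    ∀ j, 1 ≤ j → j ≤ k →
      ∀ a ∈ layer X k j, ∀ b ∈ layer X k j, ∀ c ∈ layer X k j,
        a ≠ b → a ≠ c → b ≠ c →
        ∃! p : Pt, p ∈ layerSub X k (j - 1) ∩ interior (convexHull ℝ ({a, b, c} : Set Pt))

/-- `q` is a counterclockwise enumeration of `S`. -/
def CCWEnum {m : ℕ} (S : Set Pt) (q : Fin m → Pt) : Prop :=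
  Function.Injective q ∧ Set.range q = S ∧
  ∀ a b c : Fin m, a < b → b < c → 0 < orient (q a) (q b) (q c)

/-- The ordered pair `(q1, q2)` of points of `R` is adoptable from `p`. -/
def AdoptablePair (R : Set Pt) (p q1 q2 : Pt) : Prop :=
  ∀ q3 ∈ R \ ({q1, q2} : Set Pt), p ∈ interior (convexHull ℝ ({q1, q2, q3} : Set Pt))

/-- The `i`-th binary string of length `j` in lexicographic order (`false` before `true`). -/
def strOfNat (j i : ℕ) : List Bool :=
  (List.range j).map fun t => i.testBit (j - 1 - t)

/-- The numeric (lexicographic) rank of a binary string among strings of its length. -/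
def natOfStr (s : List Bool) : ℕ := s.foldl (fun n b => 2 * n + b.toNat) 0

/-- The leftmost `k`-level descendant of the node `s`. -/
def firstStr (k : ℕ) (s : List Bool) : List Bool := s ++ List.replicate (k - s.length) false

/-- The rightmost `k`-level descendant of the node `s`. -/
def lastStr (k : ℕ) (s : List Bool) : List Bool := s ++ List.replicate (k - s.length) true

/-- Non-root nodes of the tree `T₁(k)`: binary strings of length `1..k`. -/
def ValidNode1 (k : ℕ) (s : List Bool) : Prop := 1 ≤ s.length ∧ s.length ≤ k

/-- A type-1 labeling of `X`, given by its label function `x` (the inverse of `ψ`). -/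
def IsLabeling1 (k : ℕ) (X : Set Pt) (x : List Bool → Pt) : Prop :=
  Set.InjOn x {s | ValidNode1 k s} ∧ x '' {s | ValidNode1 k s} = X

/-- A type-1 labeling is nested. -/
def Nested1 (k : ℕ) (X : Set Pt) (x : List Bool → Pt) : Prop :=
  ∀ j, 1 ≤ j → j ≤ k →
    CCWEnum (layer X k j) fun i : Fin (2 ^ j) => x (strOfNat j i.val)

/-- A type-1 labeling is adoptable. -/
def Adoptable1 (k : ℕ) (X : Set Pt) (x : List Bool → Pt) : Prop :=
  ∀ s : List Bool, 1 ≤ s.length → s.length + 1 ≤ k →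
    AdoptablePair (layer X k (s.length + 1)) (x s) (x (s ++ [false])) (x (s ++ [true]))

/-- `previous[R_k(u)]` for a type-1 labeling: the cyclic predecessor (in the left-to-right,
i.e. counterclockwise, order of the `k`-level) of `first[R_k(u)]`. -/
def prev1 (k : ℕ) (x : List Bool → Pt) (s : List Bool) : Pt :=
  x (strOfNat k ((natOfStr (firstStr k s) + (2 ^ k - 1)) % 2 ^ k))

/-- `next[R_k(u)]` for a type-1 labeling: the cyclic successor of `last[R_k(u)]`. -/
def next1 (k : ℕ) (x : List Bool → Pt) (s : List Bool) : Pt :=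
  x (strOfNat k ((natOfStr (lastStr k s) + 1) % 2 ^ k))

/-- A type-1 labeling is well laid. -/
def WellLaid1 (k : ℕ) (x : List Bool → Pt) : Prop :=
  ∀ s : List Bool, 1 ≤ s.length → s.length ≤ k →
    x s ∈ convexHull ℝ ({prev1 k x s, x (firstStr k s), x (lastStr k s)} : Set Pt) ∧
    x s ∈ convexHull ℝ ({x (firstStr k s), x (lastStr k s), next1 k x s} : Set Pt)

/-- `X_u` for a type-1 labeling: the labels of the proper descendants of `s`. -/
def descSet1 (k : ℕ) (x : List Bool → Pt) (s : List Bool) : Set Pt :=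
  x '' {t | ValidNode1 k t ∧ s <+: t ∧ s ≠ t}

/-- `X̄_u = X_u ∪ {x_u}` for a type-1 labeling. -/
def barSet1 (k : ℕ) (x : List Bool → Pt) (s : List Bool) : Set Pt :=
  insert (x s) (descSet1 k x s)

/-- A type-1 labeling is an internal separation. -/
def InternalSep1 (k : ℕ) (X : Set Pt) (x : List Bool → Pt) : Prop :=
  ∀ s : List Bool, s.length + 1 ≤ k →
    ∀ y ∈ X \ descSet1 k x s,
      ∀ a ∈ barSet1 k x (s ++ [false]), ∀ b ∈ barSet1 k x (s ++ [true]),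
        0 < orient a b y

/-- A type-1 labeling is an external separation. -/
def ExternalSep1 (k : ℕ) (X : Set Pt) (x : List Bool → Pt) : Prop :=
  ∀ s : List Bool, 1 ≤ s.length → s.length + 1 ≤ k →
    ∀ y ∈ X \ barSet1 k x s,
      (∀ a ∈ barSet1 k x (s ++ [false]), 0 < orient a (x s) y) ∧
      (∀ b ∈ barSet1 k x (s ++ [true]), 0 < orient (x s) b y)

/-- Nodes of the tree `T₂(k)`: the root `none`, and pairs `(c, s)`. -/
abbrev Node2 : Type := Option (Fin 3 × List Bool)

/-- Valid nodes of `T₂(k)`: the root, and pairs `(c, s)` with `|s| ≤ k - 2`. -/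
def ValidNode2 (k : ℕ) : Node2 → Prop
  | none => True
  | some (_, s) => s.length + 2 ≤ k

/-- A type-2 labeling of `X`, given by its label function `x` (the inverse of `ψ`). -/
def IsLabeling2 (k : ℕ) (X : Set Pt) (x : Node2 → Pt) : Prop :=
  Set.InjOn x {u | ValidNode2 k u} ∧ x '' {u | ValidNode2 k u} = X

/-- The `i`-th node (left-to-right) of the `(j+2)`-level of `T₂(k)`. -/
def node2At (j i : ℕ) : Node2 :=
  some (⟨i / 2 ^ j % 3, by omega⟩, strOfNat j (i % 2 ^ j))

/-- A type-2 labeling is nested. -/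
def Nested2 (k : ℕ) (X : Set Pt) (x : Node2 → Pt) : Prop :=
  CCWEnum (layer X k 1) (fun _ : Fin 1 => x none) ∧
  ∀ j : ℕ, j + 2 ≤ k →
    CCWEnum (layer X k (j + 2)) fun i : Fin (3 * 2 ^ j) => x (node2At j i.val)

/-- A type-2 labeling is adoptable. -/
def Adoptable2 (k : ℕ) (X : Set Pt) (x : Node2 → Pt) : Prop :=
  ∀ (c : Fin 3) (s : List Bool), s.length + 3 ≤ k →
    AdoptablePair (layer X k (s.length + 3)) (x (some (c, s)))
      (x (some (c, s ++ [false]))) (x (some (c, s ++ [true])))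

/-- `previous[R_k(u)]` for a type-2 labeling, `u = (c, s)`. -/
def prev2 (k : ℕ) (x : Node2 → Pt) (c : Fin 3) (s : List Bool) : Pt :=
  x (node2At (k - 2)
      ((c.val * 2 ^ (k - 2) + natOfStr (firstStr (k - 2) s) + (3 * 2 ^ (k - 2) - 1)) %
        (3 * 2 ^ (k - 2))))

/-- `next[R_k(u)]` for a type-2 labeling, `u = (c, s)`. -/
def next2 (k : ℕ) (x : Node2 → Pt) (c : Fin 3) (s : List Bool) : Pt :=
  x (node2At (k - 2)
      ((c.val * 2 ^ (k - 2) + natOfStr (lastStr (k - 2) s) + 1) % (3 * 2 ^ (k - 2))))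

/-- A type-2 labeling is well laid (the root is the only node with `R_k(u) = R_k`). -/
def WellLaid2 (k : ℕ) (x : Node2 → Pt) : Prop :=
  ∀ (c : Fin 3) (s : List Bool), s.length + 2 ≤ k →
    x (some (c, s)) ∈ convexHull ℝ
      ({prev2 k x c s, x (some (c, firstStr (k - 2) s)),
        x (some (c, lastStr (k - 2) s))} : Set Pt) ∧
    x (some (c, s)) ∈ convexHull ℝ
      ({x (some (c, firstStr (k - 2) s)), x (some (c, lastStr (k - 2) s)),
        next2 k x c s} : Set Pt)

/-- `X_u` for a type-2 labeling and a non-root node `u = (c, s)`. -/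
def descSet2 (k : ℕ) (x : Node2 → Pt) (c : Fin 3) (s : List Bool) : Set Pt :=
  x '' {u | ∃ t : List Bool, u = some (c, t) ∧ t.length + 2 ≤ k ∧ s <+: t ∧ s ≠ t}

/-- `X̄_u = X_u ∪ {x_u}` for a type-2 labeling and a non-root node `u = (c, s)`. -/
def barSet2 (k : ℕ) (x : Node2 → Pt) (c : Fin 3) (s : List Bool) : Set Pt :=
  insert (x (some (c, s))) (descSet2 k x c s)

/-- A type-2 labeling is an internal separation. -/
def InternalSep2 (k : ℕ) (X : Set Pt) (x : Node2 → Pt) : Prop :=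
  (∀ (c : Fin 3) (s : List Bool), s.length + 3 ≤ k →
    ∀ y ∈ X \ descSet2 k x c s,
      ∀ a ∈ barSet2 k x c (s ++ [false]), ∀ b ∈ barSet2 k x c (s ++ [true]),
        0 < orient a b y) ∧
  (∀ i : Fin 3,
    ∀ y ∈ X \ (barSet2 k x i [] ∪ barSet2 k x (i + 1) []),
      ∀ a ∈ barSet2 k x i [], ∀ b ∈ barSet2 k x (i + 1) [],
        0 < orient a b y)

/-- A type-2 labeling is an external separation. -/
def ExternalSep2 (k : ℕ) (X : Set Pt) (x : Node2 → Pt) : Prop :=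
  ∀ (c : Fin 3) (s : List Bool), s.length + 3 ≤ k →
    ∀ y ∈ X \ barSet2 k x c s,
      (∀ a ∈ barSet2 k x c (s ++ [false]), 0 < orient a (x (some (c, s))) y) ∧
      (∀ b ∈ barSet2 k x c (s ++ [true]), 0 < orient (x (some (c, s))) b y)

/-- One corner-refinement step: from `α_s = (q, o, p)` to `α_{s0}` (for `b = false`)
or `α_{s1}` (for `b = true`). -/
def cornerStep (α : Pt × Pt × Pt) (b : Bool) : Pt × Pt × Pt :=
  let q := α.1
  let o := α.2.1
  let p := α.2.2
  if b then (o + (1 / 5 : ℝ) • (q - o), o + (1 / 5 : ℝ) • (p - o), o + (2 / 5 : ℝ) • (p - o))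
  else (o + (2 / 5 : ℝ) • (q - o), o + (1 / 5 : ℝ) • (q - o), o + (1 / 5 : ℝ) • (p - o))

/-- The corner `α_s = (q_s, o_s, p_s)` assigned to the binary string `s` (with parameter `k`). -/
def corner (k : ℕ) (s : List Bool) : Pt × Pt × Pt :=
  s.foldl cornerStep
    (((0 : ℝ), (2 * 5 ^ (k + 1) : ℝ)), ((0 : ℝ), (0 : ℝ)), ((2 * 5 ^ (k + 1) : ℝ), (0 : ℝ)))

/-- The point `y_v` for a binary string `v = s ++ [b]` of positive length. -/
def ypt (k : ℕ) (v : List Bool) : Pt :=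
  let α := corner k v.dropLast
  if v.getLastD false then α.2.1 + (1 / 5 : ℝ) • (α.2.2 - α.2.1)
  else α.2.1 + (1 / 5 : ℝ) • (α.1 - α.2.1)

/-- The point `x_s`: the midpoint of `y_{s·0^(k+1−|s|)}` and `y_{s·1^(k+1−|s|)}`. -/
def xpt (k : ℕ) (s : List Bool) : Pt :=
  (1 / 2 : ℝ) •
    (ypt k (s ++ List.replicate (k + 1 - s.length) false) +
      ypt k (s ++ List.replicate (k + 1 - s.length) true))


lemma aux_proper_prefix_cons {s l : List Bool} (h : s <+: l) (hne : s ≠ l) :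
    ∃ b, s ++ [b] <+: l := by
  obtain ⟨r, rfl⟩ := h
  cases r with
  | nil => simp at hne
  | cons b r => exact ⟨b, by simp⟩

lemma aux_not_both {t : List Bool} {b : Bool} {l : List Bool}
    (h1 : t ++ [b] <+: l) (h2 : t ++ [!b] <+: l) : False := by
  have h := List.prefix_of_prefix_length_le h1 h2 (by simp)
  have := List.IsPrefix.eq_of_length h (by simp)
  simp at this

lemma aux_proper_len {t u : List Bool} (h : t <+: u) (hne : t ≠ u) :
    t.length + 1 ≤ u.length := by
  have h1 := h.length_le
  rcases lt_or_eq_of_le h1 with h2 | h2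
  · omega
  · exact absurd (List.IsPrefix.eq_of_length h h2) hne

lemma aux_step {t u l : List Bool} {b : Bool} (hb : t ++ [b] <+: l) (hu : u <+: l)
    (hlen : t.length + 1 ≤ u.length) : t ++ [b] <+: u :=
  List.prefix_of_prefix_length_le hb hu (by simpa using hlen)

lemma aux_prefix_antisymm {u v : List Bool} (h1 : u <+: v) (h2 : v <+: u) : u = v :=
  List.IsPrefix.eq_of_length h1 (le_antisymm h1.length_le h2.length_le)

lemma aux_split_or_prefix (p q : List Bool) :
    p <+: q ∨ q <+: p ∨ ∃ t b, (t ++ [b]) <+: p ∧ (t ++ [!b]) <+: q := by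
  induction p generalizing q with
  | nil => exact Or.inl (List.nil_prefix)
  | cons a p ih =>
    cases q with
    | nil => exact Or.inr (Or.inl (List.nil_prefix))
    | cons c q =>
      by_cases hac : a = c
      · subst hac
        rcases ih q with h | h | ⟨t, b, hb1, hb2⟩
        · exact Or.inl (by simp [List.cons_prefix_cons, h])
        · exact Or.inr (Or.inl (by simp [List.cons_prefix_cons, h]))
        · exact Or.inr (Or.inr ⟨a :: t, b, by simp [List.cons_prefix_cons, hb1],
            by simp [List.cons_prefix_cons, hb2]⟩)
      · refine Or.inr (Or.inr ⟨[], a, by simp, ?_⟩)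
        have hc : (!a) = c := by cases a <;> cases c <;> simp_all
        simp [hc]

def SplitP (t : List Bool) (b : Bool) (p q r : List Bool) : Prop :=
  (t ++ [b]) <+: p ∧ (t ++ [!b]) <+: q ∧ ¬ (t <+: r ∧ t ≠ r)

def ExtP (b : Bool) (t q r : List Bool) : Prop :=
  (t ++ [b]) <+: q ∧ ¬ (t <+: r)

lemma aux_classify (u v w : List Bool) (h1 : u ≠ v) (h2 : u ≠ w) (h3 : v ≠ w) :
    (∃ t b, SplitP t b u v w) ∨ (∃ t b, SplitP t b u w v) ∨ (∃ t b, SplitP t b v w u) ∨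
    (∃ b, ExtP b u v w) ∨ (∃ b, ExtP b u w v) ∨ (∃ b, ExtP b v u w) ∨
    (∃ b, ExtP b v w u) ∨ (∃ b, ExtP b w u v) ∨ (∃ b, ExtP b w v u) := by
  rcases aux_split_or_prefix u v with huv | huv | ⟨t, b, hb1, hb2⟩
  · -- u <+: v, u ≠ v
    by_cases hw : u <+: w
    · rcases aux_split_or_prefix v w with hvw | hvw | ⟨t, b, hc1, hc2⟩
      · -- v <+: w : ExtP _ v w u
        obtain ⟨b, hb⟩ := aux_proper_prefix_cons hvw h3
        exact Or.inr (Or.inr (Or.inr (Or.inr (Or.inr (Or.inr (Or.inl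
          ⟨b, hb, fun hvu => h1 (aux_prefix_antisymm huv hvu)⟩))))))
      · -- w <+: v : ExtP _ w v u
        obtain ⟨b, hb⟩ := aux_proper_prefix_cons hvw (Ne.symm h3)
        exact Or.inr (Or.inr (Or.inr (Or.inr (Or.inr (Or.inr (Or.inr (Or.inr
          ⟨b, hb, fun hwu => h2 (aux_prefix_antisymm hw hwu)⟩)))))))
      · -- split v w at t : SplitP t b v w u
        refine Or.inr (Or.inr (Or.inl ⟨t, b, hc1, hc2, fun ⟨htu, htu2⟩ => ?_⟩))
        have hlen := aux_proper_len htu htu2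
        exact aux_not_both (aux_step hc1 huv hlen) (aux_step hc2 hw hlen)
    · -- ¬ u <+: w : ExtP _ u v w
      obtain ⟨b, hb⟩ := aux_proper_prefix_cons huv h1
      exact Or.inr (Or.inr (Or.inr (Or.inl ⟨b, hb, hw⟩)))
  · -- v <+: u, v ≠ u
    by_cases hw : v <+: w
    · rcases aux_split_or_prefix u w with huw | huw | ⟨t, b, hc1, hc2⟩
      · -- u <+: w : ExtP _ u w v
        obtain ⟨b, hb⟩ := aux_proper_prefix_cons huw h2
        exact Or.inr (Or.inr (Or.inr (Or.inr (Or.inl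
          ⟨b, hb, fun huv' => h1 (aux_prefix_antisymm huv' huv)⟩))))
      · -- w <+: u : ExtP _ w u v
        obtain ⟨b, hb⟩ := aux_proper_prefix_cons huw (Ne.symm h2)
        exact Or.inr (Or.inr (Or.inr (Or.inr (Or.inr (Or.inr (Or.inr (Or.inl
          ⟨b, hb, fun hwv => h3 (aux_prefix_antisymm hw hwv)⟩)))))))
      · -- split u w at t : SplitP t b u w v
        refine Or.inr (Or.inl ⟨t, b, hc1, hc2, fun ⟨htv, htv2⟩ => ?_⟩)
        have hlen := aux_proper_len htv htv2
        exact aux_not_both (aux_step hc1 huv hlen) (aux_step hc2 hw hlen)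
    · -- ¬ v <+: w : ExtP _ v u w
      obtain ⟨b, hb⟩ := aux_proper_prefix_cons huv (Ne.symm h1)
      exact Or.inr (Or.inr (Or.inr (Or.inr (Or.inr (Or.inl ⟨b, hb, hw⟩)))))
  · -- split u v at t
    by_cases hw : t <+: w ∧ t ≠ w
    · obtain ⟨hw1, hw2⟩ := hw
      obtain ⟨b', hb'⟩ := aux_proper_prefix_cons hw1 hw2
      by_cases hbb : b' = b
      · subst hbb
        -- u, w on side b'; v on side !b'
        rcases aux_split_or_prefix u w with huw | huw | ⟨t', e, he1, he2⟩
        · -- u <+: w : ExtP _ u w v, ¬(u <+: v)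
          obtain ⟨d, hd⟩ := aux_proper_prefix_cons huw h2
          refine Or.inr (Or.inr (Or.inr (Or.inr (Or.inl ⟨d, hd, fun huv => ?_⟩))))
          exact aux_not_both (hb1.trans huv) hb2
        · -- w <+: u : ExtP _ w u v
          obtain ⟨d, hd⟩ := aux_proper_prefix_cons huw (Ne.symm h2)
          refine Or.inr (Or.inr (Or.inr (Or.inr (Or.inr (Or.inr (Or.inr (Or.inl
            ⟨d, hd, fun hwv => ?_⟩)))))))
          exact aux_not_both (hb'.trans hwv) hb2
        · -- split u w at t' : SplitP t' e u w v
          refine Or.inr (Or.inl ⟨t', e, he1, he2, fun ⟨htv, htv2⟩ => ?_⟩)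
          have ht'u : t' <+: u := (List.prefix_append t' [e]).trans he1
          have hlen : t.length + 1 ≤ t'.length := by
            by_contra hlt
            push_neg at hlt
            exact aux_not_both (aux_step he1 hb1 (by simp; omega))
              (aux_step he2 hb' (by simp; omega))
          have : t ++ [b'] <+: t' := aux_step hb1 ht'u hlen
          exact aux_not_both (this.trans htv) hb2
      · have hbb' : b' = !b := by cases b <;> cases b' <;> simp_all
        subst hbb'
        -- v, w on side !b; u on side b
        rcases aux_split_or_prefix v w with hvw | hvw | ⟨t', e, he1, he2⟩
        · -- v <+: w : ExtP _ v w u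
          obtain ⟨d, hd⟩ := aux_proper_prefix_cons hvw h3
          refine Or.inr (Or.inr (Or.inr (Or.inr (Or.inr (Or.inr (Or.inl
            ⟨d, hd, fun hvu => ?_⟩))))))
          exact aux_not_both hb1 (hb2.trans hvu)
        · -- w <+: v : ExtP _ w v u
          obtain ⟨d, hd⟩ := aux_proper_prefix_cons hvw (Ne.symm h3)
          refine Or.inr (Or.inr (Or.inr (Or.inr (Or.inr (Or.inr (Or.inr (Or.inr
            ⟨d, hd, fun hwu => ?_⟩)))))))
          exact aux_not_both hb1 (hb'.trans hwu)
        · -- split v w at t' : SplitP t' e v w u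
          refine Or.inr (Or.inr (Or.inl ⟨t', e, he1, he2, fun ⟨htu, htu2⟩ => ?_⟩))
          have ht'v : t' <+: v := (List.prefix_append t' [e]).trans he1
          have hlen : t.length + 1 ≤ t'.length := by
            by_contra hlt
            push_neg at hlt
            exact aux_not_both (aux_step he1 hb2 (by simp; omega)) (aux_step he2 hb' (by simp; omega))
          have : t ++ [!b] <+: t' := aux_step hb2 ht'v hlen
          exact aux_not_both hb1 (this.trans htu)
    · exact Or.inl ⟨t, b, hb1, hb2, hw⟩

section AuxEngine1

variable {k : ℕ} {X Y : Set Pt} {x y : List Bool → Pt}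

lemma aux_xmem1 (hL : IsLabeling1 k X x) {s : List Bool} (hs : ValidNode1 k s) : x s ∈ X := by
  rw [← hL.2]; exact ⟨s, hs, rfl⟩

lemma aux_mem_bar1 {t p : List Bool} (hp : ValidNode1 k p) (hpre : t <+: p) :
    x p ∈ barSet1 k x t := by
  by_cases h : t = p
  · subst h; exact Set.mem_insert _ _
  · exact Set.mem_insert_of_mem _ ⟨p, ⟨hp, hpre, h⟩, rfl⟩

lemma aux_not_mem_desc1 (hL : IsLabeling1 k X x) {t r : List Bool} (hr : ValidNode1 k r)
    (h : ¬ (t <+: r ∧ t ≠ r)) : x r ∉ descSet1 k x t := by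
  rintro ⟨m, ⟨hm1, hm2, hm3⟩, he⟩
  have hmr := hL.1 hm1 hr he
  subst hmr
  exact h ⟨hm2, hm3⟩

lemma aux_not_mem_bar1 (hL : IsLabeling1 k X x) {t r : List Bool} (ht : ValidNode1 k t)
    (hr : ValidNode1 k r) (h : ¬ t <+: r) : x r ∉ barSet1 k x t := by
  intro hmem
  rcases hmem with he | ⟨m, ⟨hm1, hm2, hm3⟩, he⟩
  · have := hL.1 hr ht he
    subst this
    exact h (List.prefix_refl r)
  · have := hL.1 hm1 hr he
    subst this
    exact h hm2

lemma aux_lemA1 (hL : IsLabeling1 k X x) (hI : InternalSep1 k X x)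
    {t p q r : List Bool} (hp : ValidNode1 k p) (hq : ValidNode1 k q) (hr : ValidNode1 k r)
    (h1 : t ++ [false] <+: p) (h2 : t ++ [true] <+: q) (h3 : ¬ (t <+: r ∧ t ≠ r)) :
    0 < orient (x p) (x q) (x r) := by
  have hk : t.length + 1 ≤ k := by
    have hl := h1.length_le
    have := hp.2
    simp at hl
    omega
  exact hI t hk (x r) ⟨aux_xmem1 hL hr, aux_not_mem_desc1 hL hr h3⟩
    (x p) (aux_mem_bar1 hp h1) (x q) (aux_mem_bar1 hq h2)

lemma aux_lemBf1 (hL : IsLabeling1 k X x) (hE : ExternalSep1 k X x)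
    {t q r : List Bool} (ht : ValidNode1 k t) (hq : ValidNode1 k q) (hr : ValidNode1 k r)
    (hpre : t ++ [false] <+: q) (h : ¬ t <+: r) : 0 < orient (x q) (x t) (x r) := by
  have hk : t.length + 1 ≤ k := by
    have hl := hpre.length_le
    have := hq.2
    simp at hl
    omega
  exact (hE t ht.1 hk (x r) ⟨aux_xmem1 hL hr, aux_not_mem_bar1 hL ht hr h⟩).1
    (x q) (aux_mem_bar1 hq hpre)

lemma aux_lemBt1 (hL : IsLabeling1 k X x) (hE : ExternalSep1 k X x)
    {t q r : List Bool} (ht : ValidNode1 k t) (hq : ValidNode1 k q) (hr : ValidNode1 k r)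
    (hpre : t ++ [true] <+: q) (h : ¬ t <+: r) : 0 < orient (x t) (x q) (x r) := by
  have hk : t.length + 1 ≤ k := by
    have hl := hpre.length_le
    have := hq.2
    simp at hl
    omega
  exact (hE t ht.1 hk (x r) ⟨aux_xmem1 hL hr, aux_not_mem_bar1 hL ht hr h⟩).2
    (x q) (aux_mem_bar1 hq hpre)

lemma aux_tpos {A B C D : ℝ} (hC : 0 < C) (hD : 0 < D) (h1 : A = C) (h2 : B = D) :
    (0 < A ↔ 0 < B) := by rw [h1, h2]; exact iff_of_true hC hD

lemma aux_tneg {A B C D : ℝ} (hC : 0 < C) (hD : 0 < D) (h1 : A = -C) (h2 : B = -D) :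
    (0 < A ↔ 0 < B) := iff_of_false (by rw [h1]; linarith) (by rw [h2]; linarith)

lemma aux_main1 (hLx : IsLabeling1 k X x) (hIx : InternalSep1 k X x) (hEx : ExternalSep1 k X x)
    (hLy : IsLabeling1 k Y y) (hIy : InternalSep1 k Y y) (hEy : ExternalSep1 k Y y)
    {u v w : List Bool} (hu : ValidNode1 k u) (hv : ValidNode1 k v) (hw : ValidNode1 k w)
    (d1 : u ≠ v) (d2 : u ≠ w) (d3 : v ≠ w) :
    (0 < orient (x u) (x v) (x w) ↔ 0 < orient (y u) (y v) (y w)) := by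
  rcases aux_classify u v w d1 d2 d3 with ⟨t, b, hS1, hS2, hS3⟩ | ⟨t, b, hS1, hS2, hS3⟩ |
    ⟨t, b, hS1, hS2, hS3⟩ | ⟨b, hS1, hS2⟩ | ⟨b, hS1, hS2⟩ | ⟨b, hS1, hS2⟩ | ⟨b, hS1, hS2⟩ |
    ⟨b, hS1, hS2⟩ | ⟨b, hS1, hS2⟩
  · cases b with
    | false =>
      have hx := aux_lemA1 hLx hIx hu hv hw hS1 (by simpa using hS2) hS3
      have hy := aux_lemA1 hLy hIy hu hv hw hS1 (by simpa using hS2) hS3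
      simp only [orient] at hx hy ⊢
      constructor <;> intro h <;> linarith
    | true =>
      have hx := aux_lemA1 hLx hIx hv hu hw (by simpa using hS2) hS1 hS3
      have hy := aux_lemA1 hLy hIy hv hu hw (by simpa using hS2) hS1 hS3
      simp only [orient] at hx hy ⊢
      constructor <;> intro h <;> linarith
  · cases b with
    | false =>
      have hx := aux_lemA1 hLx hIx hu hw hv hS1 (by simpa using hS2) hS3
      have hy := aux_lemA1 hLy hIy hu hw hv hS1 (by simpa using hS2) hS3
      simp only [orient] at hx hy ⊢
      constructor <;> intro h <;> linarith
    | true =>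
      have hx := aux_lemA1 hLx hIx hw hu hv (by simpa using hS2) hS1 hS3
      have hy := aux_lemA1 hLy hIy hw hu hv (by simpa using hS2) hS1 hS3
      simp only [orient] at hx hy ⊢
      constructor <;> intro h <;> linarith
  · cases b with
    | false =>
      have hx := aux_lemA1 hLx hIx hv hw hu hS1 (by simpa using hS2) hS3
      have hy := aux_lemA1 hLy hIy hv hw hu hS1 (by simpa using hS2) hS3
      simp only [orient] at hx hy ⊢
      constructor <;> intro h <;> linarith
    | true =>
      have hx := aux_lemA1 hLx hIx hw hv hu (by simpa using hS2) hS1 hS3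
      have hy := aux_lemA1 hLy hIy hw hv hu (by simpa using hS2) hS1 hS3
      simp only [orient] at hx hy ⊢
      constructor <;> intro h <;> linarith
  · cases b with
    | false =>
      have hx := aux_lemBf1 hLx hEx hu hv hw hS1 hS2
      have hy := aux_lemBf1 hLy hEy hu hv hw hS1 hS2
      simp only [orient] at hx hy ⊢
      constructor <;> intro h <;> linarith
    | true =>
      have hx := aux_lemBt1 hLx hEx hu hv hw hS1 hS2
      have hy := aux_lemBt1 hLy hEy hu hv hw hS1 hS2
      simp only [orient] at hx hy ⊢
      constructor <;> intro h <;> linarith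
  · cases b with
    | false =>
      have hx := aux_lemBf1 hLx hEx hu hw hv hS1 hS2
      have hy := aux_lemBf1 hLy hEy hu hw hv hS1 hS2
      simp only [orient] at hx hy ⊢
      constructor <;> intro h <;> linarith
    | true =>
      have hx := aux_lemBt1 hLx hEx hu hw hv hS1 hS2
      have hy := aux_lemBt1 hLy hEy hu hw hv hS1 hS2
      simp only [orient] at hx hy ⊢
      constructor <;> intro h <;> linarith
  · cases b with
    | false =>
      have hx := aux_lemBf1 hLx hEx hv hu hw hS1 hS2
      have hy := aux_lemBf1 hLy hEy hv hu hw hS1 hS2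
      simp only [orient] at hx hy ⊢
      constructor <;> intro h <;> linarith
    | true =>
      have hx := aux_lemBt1 hLx hEx hv hu hw hS1 hS2
      have hy := aux_lemBt1 hLy hEy hv hu hw hS1 hS2
      simp only [orient] at hx hy ⊢
      constructor <;> intro h <;> linarith
  · cases b with
    | false =>
      have hx := aux_lemBf1 hLx hEx hv hw hu hS1 hS2
      have hy := aux_lemBf1 hLy hEy hv hw hu hS1 hS2
      simp only [orient] at hx hy ⊢
      constructor <;> intro h <;> linarith
    | true =>
      have hx := aux_lemBt1 hLx hEx hv hw hu hS1 hS2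
      have hy := aux_lemBt1 hLy hEy hv hw hu hS1 hS2
      simp only [orient] at hx hy ⊢
      constructor <;> intro h <;> linarith
  · cases b with
    | false =>
      have hx := aux_lemBf1 hLx hEx hw hu hv hS1 hS2
      have hy := aux_lemBf1 hLy hEy hw hu hv hS1 hS2
      simp only [orient] at hx hy ⊢
      constructor <;> intro h <;> linarith
    | true =>
      have hx := aux_lemBt1 hLx hEx hw hu hv hS1 hS2
      have hy := aux_lemBt1 hLy hEy hw hu hv hS1 hS2
      simp only [orient] at hx hy ⊢
      constructor <;> intro h <;> linarith
  · cases b with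
    | false =>
      have hx := aux_lemBf1 hLx hEx hw hv hu hS1 hS2
      have hy := aux_lemBf1 hLy hEy hw hv hu hS1 hS2
      simp only [orient] at hx hy ⊢
      constructor <;> intro h <;> linarith
    | true =>
      have hx := aux_lemBt1 hLx hEx hw hv hu hS1 hS2
      have hy := aux_lemBt1 hLy hEy hw hv hu hS1 hS2
      simp only [orient] at hx hy ⊢
      constructor <;> intro h <;> linarith

end AuxEngine1

section Wrap

lemma aux_build1 {k : ℕ} {X Y : Set Pt}
    (xl yl : List Bool → Pt)
    (hLx : IsLabeling1 k X xl) (hIx : InternalSep1 k X xl) (hEx : ExternalSep1 k X xl)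
    (hLy : IsLabeling1 k Y yl) (hIy : InternalSep1 k Y yl) (hEy : ExternalSep1 k Y yl) :
    ∃ f : Pt → Pt, Set.BijOn f X Y ∧ (∀ s : List Bool, ValidNode1 k s → f (xl s) = yl s) ∧
      ∀ a ∈ X, ∀ b ∈ X, ∀ c ∈ X, a ≠ b → a ≠ c → b ≠ c →
        (0 < orient a b c ↔ 0 < orient (f a) (f b) (f c)) := by
  classical
  have hsurj : ∀ p ∈ X, ∃ s, ValidNode1 k s ∧ xl s = p := by
    intro p hp
    rw [← hLx.2] at hp
    obtain ⟨s, hs, rfl⟩ := hp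
    exact ⟨s, hs, rfl⟩
  choose g hg1 hg2 using hsurj
  set f : Pt → Pt := fun p => if h : p ∈ X then yl (g p h) else p with hf
  have key : ∀ s : List Bool, ValidNode1 k s → f (xl s) = yl s := by
    intro s hs
    have hx : xl s ∈ X := aux_xmem1 hLx hs
    have hgs : g (xl s) hx = s := hLx.1 (hg1 _ hx) hs (hg2 _ hx)
    simp only [hf, dif_pos hx, hgs]
  have hfval : ∀ p (hp : p ∈ X), f p = yl (g p hp) := by
    intro p hp; simp only [hf, dif_pos hp]
  refine ⟨f, ⟨?_, ?_, ?_⟩, key, ?_⟩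
  · intro p hp
    rw [hfval p hp, ← hLy.2]
    exact ⟨_, hg1 _ hp, rfl⟩
  · intro p hp p' hp' h
    rw [hfval p hp, hfval p' hp'] at h
    have := hLy.1 (hg1 _ hp) (hg1 _ hp') h
    rw [← hg2 _ hp, ← hg2 _ hp', this]
  · intro q hq
    rw [← hLy.2] at hq
    obtain ⟨s, hs, rfl⟩ := hq
    exact ⟨xl s, aux_xmem1 hLx hs, key s hs⟩
  · intro a ha b hb c hc hab hac hbc
    have ea : xl (g a ha) = a := hg2 _ ha
    have eb : xl (g b hb) = b := hg2 _ hb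
    have ec : xl (g c hc) = c := hg2 _ hc
    have d1 : g a ha ≠ g b hb := fun h => hab (by rw [← ea, ← eb, h])
    have d2 : g a ha ≠ g c hc := fun h => hac (by rw [← ea, ← ec, h])
    have d3 : g b hb ≠ g c hc := fun h => hbc (by rw [← eb, ← ec, h])
    have hm := aux_main1 hLx hIx hEx hLy hIy hEy (hg1 _ ha) (hg1 _ hb) (hg1 _ hc) d1 d2 d3
    rw [ea, eb, ec] at hm
    rw [hfval a ha, hfval b hb, hfval c hc]
    exact hm

end Wrap

section AuxEngine2

variable {k : ℕ} {X Y : Set Pt} {x y : Node2 → Pt}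

lemma aux_fin3 : ∀ a b : Fin 3, a ≠ b → b = a + 1 ∨ a = b + 1 := by decide

lemma aux_conv {P : List Bool → Prop} {c : Fin 3} {s : List Bool} (hP : P s) :
    ∀ r, (some (c, s) : Node2) = some (c, r) → P r := by
  intro r h
  have e : s = r := by simpa using h
  exact e ▸ hP

lemma aux_class_ne {c c' : Fin 3} (h : c' ≠ c) (s : List Bool) :
    ∀ r, (some (c', s) : Node2) ≠ some (c, r) := by
  intro r he
  simp only [Option.some.injEq, Prod.mk.injEq] at he
  exact h he.1

lemma aux_none_ne {c : Fin 3} : ∀ r, (none : Node2) ≠ some (c, r) := by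
  intro r he
  simp at he

lemma aux_xmem2 (hL : IsLabeling2 k X x) {u : Node2} (hu : ValidNode2 k u) : x u ∈ X := by
  rw [← hL.2]; exact ⟨u, hu, rfl⟩

lemma aux_mem_bar2 {c : Fin 3} {t p : List Bool} (hp : p.length + 2 ≤ k) (hpre : t <+: p) :
    x (some (c, p)) ∈ barSet2 k x c t := by
  by_cases h : t = p
  · subst h; exact Set.mem_insert _ _
  · exact Set.mem_insert_of_mem _ ⟨some (c, p), ⟨p, rfl, hp, hpre, h⟩, rfl⟩

lemma aux_not_mem_desc2 (hL : IsLabeling2 k X x) {c : Fin 3} {t : List Bool} {u : Node2}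
    (hu : ValidNode2 k u) (h : ∀ r, u = some (c, r) → ¬ (t <+: r ∧ t ≠ r)) :
    x u ∉ descSet2 k x c t := by
  rintro ⟨m, ⟨r, rfl, hv, hp, hne⟩, he⟩
  have hm : ValidNode2 k (some (c, r)) := hv
  have heq := hL.1 hm hu he
  exact h r heq.symm ⟨hp, hne⟩

lemma aux_not_mem_bar2 (hL : IsLabeling2 k X x) {c : Fin 3} {t : List Bool} {u : Node2}
    (ht : t.length + 2 ≤ k) (hu : ValidNode2 k u) (h : ∀ r, u = some (c, r) → ¬ t <+: r) :
    x u ∉ barSet2 k x c t := by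
  intro hmem
  rcases hmem with he | ⟨m, ⟨r, rfl, hv, hp, hne⟩, he⟩
  · have ht' : ValidNode2 k (some (c, t)) := ht
    exact h t (hL.1 hu ht' he) (List.prefix_refl t)
  · have hm : ValidNode2 k (some (c, r)) := hv
    exact h r (hL.1 hm hu he).symm hp

lemma aux_lem2A (hL : IsLabeling2 k X x) (hI : InternalSep2 k X x)
    {c : Fin 3} {t p q : List Bool} {u : Node2}
    (hp : p.length + 2 ≤ k) (hq : q.length + 2 ≤ k) (hu : ValidNode2 k u)
    (h1 : t ++ [false] <+: p) (h2 : t ++ [true] <+: q)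
    (h3 : ∀ r, u = some (c, r) → ¬ (t <+: r ∧ t ≠ r)) :
    0 < orient (x (some (c, p))) (x (some (c, q))) (x u) := by
  have hk : t.length + 3 ≤ k := by
    have hl := h1.length_le
    simp at hl
    omega
  exact hI.1 c t hk (x u) ⟨aux_xmem2 hL hu, aux_not_mem_desc2 hL hu h3⟩
    _ (aux_mem_bar2 hp h1) _ (aux_mem_bar2 hq h2)

lemma aux_lem2Bf (hL : IsLabeling2 k X x) (hE : ExternalSep2 k X x)
    {c : Fin 3} {t q : List Bool} {u : Node2}
    (hq : q.length + 2 ≤ k) (hu : ValidNode2 k u)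
    (hpre : t ++ [false] <+: q) (h : ∀ r, u = some (c, r) → ¬ t <+: r) :
    0 < orient (x (some (c, q))) (x (some (c, t))) (x u) := by
  have hl : t.length + 1 ≤ q.length := by simpa using hpre.length_le
  exact (hE c t (by omega) (x u)
    ⟨aux_xmem2 hL hu, aux_not_mem_bar2 hL (by omega) hu h⟩).1 _ (aux_mem_bar2 hq hpre)

lemma aux_lem2Bt (hL : IsLabeling2 k X x) (hE : ExternalSep2 k X x)
    {c : Fin 3} {t q : List Bool} {u : Node2}
    (hq : q.length + 2 ≤ k) (hu : ValidNode2 k u)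
    (hpre : t ++ [true] <+: q) (h : ∀ r, u = some (c, r) → ¬ t <+: r) :
    0 < orient (x (some (c, t))) (x (some (c, q))) (x u) := by
  have hl : t.length + 1 ≤ q.length := by simpa using hpre.length_le
  exact (hE c t (by omega) (x u)
    ⟨aux_xmem2 hL hu, aux_not_mem_bar2 hL (by omega) hu h⟩).2 _ (aux_mem_bar2 hq hpre)

lemma aux_lem2C (hL : IsLabeling2 k X x) (hI : InternalSep2 k X x)
    {i : Fin 3} {sp sq : List Bool} {u : Node2}
    (hp : sp.length + 2 ≤ k) (hq : sq.length + 2 ≤ k) (hu : ValidNode2 k u)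
    (h1 : ∀ r, u ≠ some (i, r)) (h2 : ∀ r, u ≠ some (i + 1, r)) :
    0 < orient (x (some (i, sp))) (x (some (i + 1, sq))) (x u) := by
  have hnil : (List.nil (α := Bool)).length + 2 ≤ k := by
    simp only [List.length_nil]; omega
  refine hI.2 i (x u) ⟨aux_xmem2 hL hu, ?_⟩ _ (aux_mem_bar2 hp (List.nil_prefix))
    _ (aux_mem_bar2 hq (List.nil_prefix))
  intro hmem
  rcases hmem with h | h
  · exact aux_not_mem_bar2 hL hnil hu (fun r hr => absurd hr (h1 r)) h
  · exact aux_not_mem_bar2 hL hnil hu (fun r hr => absurd hr (h2 r)) h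

lemma aux_pair2 (hLx : IsLabeling2 k X x) (hIx : InternalSep2 k X x) (hEx : ExternalSep2 k X x)
    (hLy : IsLabeling2 k Y y) (hIy : InternalSep2 k Y y) (hEy : ExternalSep2 k Y y)
    {c : Fin 3} {s1 s2 : List Bool} {u3 : Node2}
    (h1 : s1.length + 2 ≤ k) (h2 : s2.length + 2 ≤ k) (hu3 : ValidNode2 k u3)
    (hdiff : ∀ r, u3 ≠ some (c, r)) (d : s1 ≠ s2) :
    (0 < orient (x (some (c, s1))) (x (some (c, s2))) (x u3) ↔
      0 < orient (y (some (c, s1))) (y (some (c, s2))) (y u3)) := by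
  have hcond : ∀ r, u3 = some (c, r) → ¬ (List.nil <+: r ∧ List.nil ≠ r) :=
    fun r h => absurd h (hdiff r)
  rcases aux_split_or_prefix s1 s2 with h | h | ⟨t, b, e1, e2⟩
  · obtain ⟨b, hb⟩ := aux_proper_prefix_cons h d
    cases b with
    | false =>
      have hx := aux_lem2Bf hLx hEx h2 hu3 hb (fun r hr => absurd hr (hdiff r))
      have hy := aux_lem2Bf hLy hEy h2 hu3 hb (fun r hr => absurd hr (hdiff r))
      simp only [orient] at hx hy ⊢
      constructor <;> intro hh <;> linarith
    | true =>
      have hx := aux_lem2Bt hLx hEx h2 hu3 hb (fun r hr => absurd hr (hdiff r))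
      have hy := aux_lem2Bt hLy hEy h2 hu3 hb (fun r hr => absurd hr (hdiff r))
      simp only [orient] at hx hy ⊢
      constructor <;> intro hh <;> linarith
  · obtain ⟨b, hb⟩ := aux_proper_prefix_cons h (Ne.symm d)
    cases b with
    | false =>
      have hx := aux_lem2Bf hLx hEx h1 hu3 hb (fun r hr => absurd hr (hdiff r))
      have hy := aux_lem2Bf hLy hEy h1 hu3 hb (fun r hr => absurd hr (hdiff r))
      simp only [orient] at hx hy ⊢
      constructor <;> intro hh <;> linarith
    | true =>
      have hx := aux_lem2Bt hLx hEx h1 hu3 hb (fun r hr => absurd hr (hdiff r))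
      have hy := aux_lem2Bt hLy hEy h1 hu3 hb (fun r hr => absurd hr (hdiff r))
      simp only [orient] at hx hy ⊢
      constructor <;> intro hh <;> linarith
  · cases b with
    | false =>
      have hx := aux_lem2A hLx hIx h1 h2 hu3 e1 (by simpa using e2)
        (fun r hr => absurd hr (hdiff r))
      have hy := aux_lem2A hLy hIy h1 h2 hu3 e1 (by simpa using e2)
        (fun r hr => absurd hr (hdiff r))
      simp only [orient] at hx hy ⊢
      constructor <;> intro hh <;> linarith
    | true =>
      have hx := aux_lem2A hLx hIx h2 h1 hu3 (by simpa using e2) e1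
        (fun r hr => absurd hr (hdiff r))
      have hy := aux_lem2A hLy hIy h2 h1 hu3 (by simpa using e2) e1
        (fun r hr => absurd hr (hdiff r))
      simp only [orient] at hx hy ⊢
      constructor <;> intro hh <;> linarith

lemma aux_samec (hLx : IsLabeling2 k X x) (hIx : InternalSep2 k X x) (hEx : ExternalSep2 k X x)
    (hLy : IsLabeling2 k Y y) (hIy : InternalSep2 k Y y) (hEy : ExternalSep2 k Y y)
    {c : Fin 3} {s1 s2 s3 : List Bool}
    (h1 : s1.length + 2 ≤ k) (h2 : s2.length + 2 ≤ k) (h3 : s3.length + 2 ≤ k)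
    (d1 : s1 ≠ s2) (d2 : s1 ≠ s3) (d3 : s2 ≠ s3) :
    (0 < orient (x (some (c, s1))) (x (some (c, s2))) (x (some (c, s3))) ↔
      0 < orient (y (some (c, s1))) (y (some (c, s2))) (y (some (c, s3)))) := by
  have hn1 : ValidNode2 k (some (c, s1)) := h1
  have hn2 : ValidNode2 k (some (c, s2)) := h2
  have hn3 : ValidNode2 k (some (c, s3)) := h3
  rcases aux_classify s1 s2 s3 d1 d2 d3 with ⟨t, b, hS1, hS2, hS3⟩ | ⟨t, b, hS1, hS2, hS3⟩ |
    ⟨t, b, hS1, hS2, hS3⟩ | ⟨b, hS1, hS2⟩ | ⟨b, hS1, hS2⟩ | ⟨b, hS1, hS2⟩ | ⟨b, hS1, hS2⟩ |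
    ⟨b, hS1, hS2⟩ | ⟨b, hS1, hS2⟩
  · cases b with
    | false =>
      have hx := aux_lem2A hLx hIx h1 h2 hn3 hS1 (by simpa using hS2) (aux_conv hS3)
      have hy := aux_lem2A hLy hIy h1 h2 hn3 hS1 (by simpa using hS2) (aux_conv hS3)
      simp only [orient] at hx hy ⊢
      constructor <;> intro hh <;> linarith
    | true =>
      have hx := aux_lem2A hLx hIx h2 h1 hn3 (by simpa using hS2) hS1 (aux_conv hS3)
      have hy := aux_lem2A hLy hIy h2 h1 hn3 (by simpa using hS2) hS1 (aux_conv hS3)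
      simp only [orient] at hx hy ⊢
      constructor <;> intro hh <;> linarith
  · cases b with
    | false =>
      have hx := aux_lem2A hLx hIx h1 h3 hn2 hS1 (by simpa using hS2) (aux_conv hS3)
      have hy := aux_lem2A hLy hIy h1 h3 hn2 hS1 (by simpa using hS2) (aux_conv hS3)
      simp only [orient] at hx hy ⊢
      constructor <;> intro hh <;> linarith
    | true =>
      have hx := aux_lem2A hLx hIx h3 h1 hn2 (by simpa using hS2) hS1 (aux_conv hS3)
      have hy := aux_lem2A hLy hIy h3 h1 hn2 (by simpa using hS2) hS1 (aux_conv hS3)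
      simp only [orient] at hx hy ⊢
      constructor <;> intro hh <;> linarith
  · cases b with
    | false =>
      have hx := aux_lem2A hLx hIx h2 h3 hn1 hS1 (by simpa using hS2) (aux_conv hS3)
      have hy := aux_lem2A hLy hIy h2 h3 hn1 hS1 (by simpa using hS2) (aux_conv hS3)
      simp only [orient] at hx hy ⊢
      constructor <;> intro hh <;> linarith
    | true =>
      have hx := aux_lem2A hLx hIx h3 h2 hn1 (by simpa using hS2) hS1 (aux_conv hS3)
      have hy := aux_lem2A hLy hIy h3 h2 hn1 (by simpa using hS2) hS1 (aux_conv hS3)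
      simp only [orient] at hx hy ⊢
      constructor <;> intro hh <;> linarith
  · cases b with
    | false =>
      have hx := aux_lem2Bf hLx hEx h2 hn3 hS1 (aux_conv hS2)
      have hy := aux_lem2Bf hLy hEy h2 hn3 hS1 (aux_conv hS2)
      simp only [orient] at hx hy ⊢
      constructor <;> intro hh <;> linarith
    | true =>
      have hx := aux_lem2Bt hLx hEx h2 hn3 hS1 (aux_conv hS2)
      have hy := aux_lem2Bt hLy hEy h2 hn3 hS1 (aux_conv hS2)
      simp only [orient] at hx hy ⊢
      constructor <;> intro hh <;> linarith
  · cases b with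
    | false =>
      have hx := aux_lem2Bf hLx hEx h3 hn2 hS1 (aux_conv hS2)
      have hy := aux_lem2Bf hLy hEy h3 hn2 hS1 (aux_conv hS2)
      simp only [orient] at hx hy ⊢
      constructor <;> intro hh <;> linarith
    | true =>
      have hx := aux_lem2Bt hLx hEx h3 hn2 hS1 (aux_conv hS2)
      have hy := aux_lem2Bt hLy hEy h3 hn2 hS1 (aux_conv hS2)
      simp only [orient] at hx hy ⊢
      constructor <;> intro hh <;> linarith
  · cases b with
    | false =>
      have hx := aux_lem2Bf hLx hEx h1 hn3 hS1 (aux_conv hS2)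
      have hy := aux_lem2Bf hLy hEy h1 hn3 hS1 (aux_conv hS2)
      simp only [orient] at hx hy ⊢
      constructor <;> intro hh <;> linarith
    | true =>
      have hx := aux_lem2Bt hLx hEx h1 hn3 hS1 (aux_conv hS2)
      have hy := aux_lem2Bt hLy hEy h1 hn3 hS1 (aux_conv hS2)
      simp only [orient] at hx hy ⊢
      constructor <;> intro hh <;> linarith
  · cases b with
    | false =>
      have hx := aux_lem2Bf hLx hEx h3 hn1 hS1 (aux_conv hS2)
      have hy := aux_lem2Bf hLy hEy h3 hn1 hS1 (aux_conv hS2)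
      simp only [orient] at hx hy ⊢
      constructor <;> intro hh <;> linarith
    | true =>
      have hx := aux_lem2Bt hLx hEx h3 hn1 hS1 (aux_conv hS2)
      have hy := aux_lem2Bt hLy hEy h3 hn1 hS1 (aux_conv hS2)
      simp only [orient] at hx hy ⊢
      constructor <;> intro hh <;> linarith
  · cases b with
    | false =>
      have hx := aux_lem2Bf hLx hEx h1 hn2 hS1 (aux_conv hS2)
      have hy := aux_lem2Bf hLy hEy h1 hn2 hS1 (aux_conv hS2)
      simp only [orient] at hx hy ⊢
      constructor <;> intro hh <;> linarith
    | true =>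
      have hx := aux_lem2Bt hLx hEx h1 hn2 hS1 (aux_conv hS2)
      have hy := aux_lem2Bt hLy hEy h1 hn2 hS1 (aux_conv hS2)
      simp only [orient] at hx hy ⊢
      constructor <;> intro hh <;> linarith
  · cases b with
    | false =>
      have hx := aux_lem2Bf hLx hEx h2 hn1 hS1 (aux_conv hS2)
      have hy := aux_lem2Bf hLy hEy h2 hn1 hS1 (aux_conv hS2)
      simp only [orient] at hx hy ⊢
      constructor <;> intro hh <;> linarith
    | true =>
      have hx := aux_lem2Bt hLx hEx h2 hn1 hS1 (aux_conv hS2)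
      have hy := aux_lem2Bt hLy hEy h2 hn1 hS1 (aux_conv hS2)
      simp only [orient] at hx hy ⊢
      constructor <;> intro hh <;> linarith

end AuxEngine2

section AuxMain2

variable {k : ℕ} {X Y : Set Pt} {x y : Node2 → Pt}

lemma aux_main2 (hLx : IsLabeling2 k X x) (hIx : InternalSep2 k X x) (hEx : ExternalSep2 k X x)
    (hLy : IsLabeling2 k Y y) (hIy : InternalSep2 k Y y) (hEy : ExternalSep2 k Y y)
    {u v w : Node2} (hu : ValidNode2 k u) (hv : ValidNode2 k v) (hw : ValidNode2 k w)
    (d1 : u ≠ v) (d2 : u ≠ w) (d3 : v ≠ w) :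
    (0 < orient (x u) (x v) (x w) ↔ 0 < orient (y u) (y v) (y w)) := by
  cases u with
  | none =>
    cases v with
    | none => exact absurd rfl d1
    | some p1 =>
      obtain ⟨c1, s1⟩ := p1
      cases w with
      | none => exact absurd rfl d2
      | some p2 =>
        obtain ⟨c2, s2⟩ := p2
        have h1 : s1.length + 2 ≤ k := hv
        have h2 : s2.length + 2 ≤ k := hw
        by_cases hc : c1 = c2
        · subst hc
          have hs : s1 ≠ s2 := fun h => d3 (by rw [h])
          have hpair := aux_pair2 (c := c1) hLx hIx hEx hLy hIy hEy h1 h2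
            (show ValidNode2 k none from trivial) aux_none_ne hs
          have e1 : orient (x none) (x (some (c1, s1))) (x (some (c1, s2))) =
              orient (x (some (c1, s1))) (x (some (c1, s2))) (x none) := by
            simp only [orient]; ring
          have e2 : orient (y none) (y (some (c1, s1))) (y (some (c1, s2))) =
              orient (y (some (c1, s1))) (y (some (c1, s2))) (y none) := by
            simp only [orient]; ring
          rw [e1, e2]
          exact hpair
        · rcases aux_fin3 c1 c2 hc with he | he
          · subst he
            have hx := aux_lem2C (i := c1) hLx hIx h1 h2 (show ValidNode2 k none from trivial)
              aux_none_ne aux_none_ne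
            have hy := aux_lem2C (i := c1) hLy hIy h1 h2 (show ValidNode2 k none from trivial)
              aux_none_ne aux_none_ne
            simp only [orient] at hx hy ⊢
            constructor <;> intro hh <;> linarith
          · subst he
            have hx := aux_lem2C (i := c2) hLx hIx h2 h1 (show ValidNode2 k none from trivial)
              aux_none_ne aux_none_ne
            have hy := aux_lem2C (i := c2) hLy hIy h2 h1 (show ValidNode2 k none from trivial)
              aux_none_ne aux_none_ne
            simp only [orient] at hx hy ⊢
            constructor <;> intro hh <;> linarith
  | some p1 =>
    obtain ⟨c1, s1⟩ := p1
    have h1 : s1.length + 2 ≤ k := hu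
    cases v with
    | none =>
      cases w with
      | none => exact absurd rfl d3
      | some p2 =>
        obtain ⟨c2, s2⟩ := p2
        have h2 : s2.length + 2 ≤ k := hw
        by_cases hc : c1 = c2
        · subst hc
          have hs : s2 ≠ s1 := fun h => d2 (by rw [h])
          have hpair := aux_pair2 (c := c1) hLx hIx hEx hLy hIy hEy h2 h1
            (show ValidNode2 k none from trivial) aux_none_ne hs
          have e1 : orient (x (some (c1, s1))) (x none) (x (some (c1, s2))) =
              orient (x (some (c1, s2))) (x (some (c1, s1))) (x none) := by
            simp only [orient]; ring
          have e2 : orient (y (some (c1, s1))) (y none) (y (some (c1, s2))) =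
              orient (y (some (c1, s2))) (y (some (c1, s1))) (y none) := by
            simp only [orient]; ring
          rw [e1, e2]
          exact hpair
        · rcases aux_fin3 c1 c2 hc with he | he
          · subst he
            have hx := aux_lem2C (i := c1) hLx hIx h1 h2 (show ValidNode2 k none from trivial)
              aux_none_ne aux_none_ne
            have hy := aux_lem2C (i := c1) hLy hIy h1 h2 (show ValidNode2 k none from trivial)
              aux_none_ne aux_none_ne
            simp only [orient] at hx hy ⊢
            constructor <;> intro hh <;> linarith
          · subst he
            have hx := aux_lem2C (i := c2) hLx hIx h2 h1 (show ValidNode2 k none from trivial)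
              aux_none_ne aux_none_ne
            have hy := aux_lem2C (i := c2) hLy hIy h2 h1 (show ValidNode2 k none from trivial)
              aux_none_ne aux_none_ne
            simp only [orient] at hx hy ⊢
            constructor <;> intro hh <;> linarith
    | some p2 =>
      obtain ⟨c2, s2⟩ := p2
      have h2 : s2.length + 2 ≤ k := hv
      cases w with
      | none =>
        by_cases hc : c1 = c2
        · subst hc
          have hs : s1 ≠ s2 := fun h => d1 (by rw [h])
          exact aux_pair2 hLx hIx hEx hLy hIy hEy h1 h2 (show ValidNode2 k none from trivial)
            (aux_none_ne) hs
        · rcases aux_fin3 c1 c2 hc with he | he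
          · subst he
            have hx := aux_lem2C (i := c1) hLx hIx h1 h2 (show ValidNode2 k none from trivial)
              aux_none_ne aux_none_ne
            have hy := aux_lem2C (i := c1) hLy hIy h1 h2 (show ValidNode2 k none from trivial)
              aux_none_ne aux_none_ne
            simp only [orient] at hx hy ⊢
            constructor <;> intro hh <;> linarith
          · subst he
            have hx := aux_lem2C (i := c2) hLx hIx h2 h1 (show ValidNode2 k none from trivial)
              aux_none_ne aux_none_ne
            have hy := aux_lem2C (i := c2) hLy hIy h2 h1 (show ValidNode2 k none from trivial)
              aux_none_ne aux_none_ne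
            simp only [orient] at hx hy ⊢
            constructor <;> intro hh <;> linarith
      | some p3 =>
        obtain ⟨c3, s3⟩ := p3
        have h3 : s3.length + 2 ≤ k := hw
        by_cases h12 : c1 = c2
        · by_cases h13 : c1 = c3
          · subst h12; subst h13
            have e1 : s1 ≠ s2 := fun h => d1 (by rw [h])
            have e2 : s1 ≠ s3 := fun h => d2 (by rw [h])
            have e3 : s2 ≠ s3 := fun h => d3 (by rw [h])
            exact aux_samec hLx hIx hEx hLy hIy hEy h1 h2 h3 e1 e2 e3
          · subst h12
            have hs : s1 ≠ s2 := fun h => d1 (by rw [h])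
            exact aux_pair2 hLx hIx hEx hLy hIy hEy h1 h2 (show ValidNode2 k (some (c3, s3)) from h3)
              (aux_class_ne (Ne.symm h13) s3) hs
        · by_cases h13 : c1 = c3
          · subst h13
            have hs : s3 ≠ s1 := fun h => d2 (by rw [h])
            have hpair := aux_pair2 hLx hIx hEx hLy hIy hEy h3 h1
              (show ValidNode2 k (some (c2, s2)) from h2) (aux_class_ne (fun h => h12 h.symm) s2) hs
            have e1 : orient (x (some (c1, s1))) (x (some (c2, s2))) (x (some (c1, s3))) =
                orient (x (some (c1, s3))) (x (some (c1, s1))) (x (some (c2, s2))) := by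
              simp only [orient]; ring
            have e2 : orient (y (some (c1, s1))) (y (some (c2, s2))) (y (some (c1, s3))) =
                orient (y (some (c1, s3))) (y (some (c1, s1))) (y (some (c2, s2))) := by
              simp only [orient]; ring
            rw [e1, e2]
            exact hpair
          · by_cases h23 : c2 = c3
            · subst h23
              have hs : s2 ≠ s3 := fun h => d3 (by rw [h])
              have hpair := aux_pair2 hLx hIx hEx hLy hIy hEy h2 h3
                (show ValidNode2 k (some (c1, s1)) from h1) (aux_class_ne h12 s1) hs
              have e1 : orient (x (some (c1, s1))) (x (some (c2, s2))) (x (some (c2, s3))) =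
                  orient (x (some (c2, s2))) (x (some (c2, s3))) (x (some (c1, s1))) := by
                simp only [orient]; ring
              have e2 : orient (y (some (c1, s1))) (y (some (c2, s2))) (y (some (c2, s3))) =
                  orient (y (some (c2, s2))) (y (some (c2, s3))) (y (some (c1, s1))) := by
                simp only [orient]; ring
              rw [e1, e2]
              exact hpair
            · rcases aux_fin3 c1 c2 h12 with he | he
              · subst he
                have hx := aux_lem2C (i := c1) hLx hIx h1 h2 (show ValidNode2 k (some (c3, s3)) from h3)
                  (aux_class_ne (Ne.symm h13) s3) (aux_class_ne (fun h => h23 h.symm) s3)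
                have hy := aux_lem2C (i := c1) hLy hIy h1 h2 (show ValidNode2 k (some (c3, s3)) from h3)
                  (aux_class_ne (Ne.symm h13) s3) (aux_class_ne (fun h => h23 h.symm) s3)
                simp only [orient] at hx hy ⊢
                constructor <;> intro hh <;> linarith
              · subst he
                have hx := aux_lem2C (i := c2) hLx hIx h2 h1 (show ValidNode2 k (some (c3, s3)) from h3)
                  (aux_class_ne (fun h => h23 h.symm) s3) (aux_class_ne (Ne.symm h13) s3)
                have hy := aux_lem2C (i := c2) hLy hIy h2 h1 (show ValidNode2 k (some (c3, s3)) from h3)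
                  (aux_class_ne (fun h => h23 h.symm) s3) (aux_class_ne (Ne.symm h13) s3)
                simp only [orient] at hx hy ⊢
                constructor <;> intro hh <;> linarith

lemma aux_build2 {k : ℕ} {X Y : Set Pt}
    (xl yl : Node2 → Pt)
    (hLx : IsLabeling2 k X xl) (hIx : InternalSep2 k X xl) (hEx : ExternalSep2 k X xl)
    (hLy : IsLabeling2 k Y yl) (hIy : InternalSep2 k Y yl) (hEy : ExternalSep2 k Y yl) :
    ∃ f : Pt → Pt, Set.BijOn f X Y ∧ (∀ u : Node2, ValidNode2 k u → f (xl u) = yl u) ∧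
      ∀ a ∈ X, ∀ b ∈ X, ∀ c ∈ X, a ≠ b → a ≠ c → b ≠ c →
        (0 < orient a b c ↔ 0 < orient (f a) (f b) (f c)) := by
  classical
  have hsurj : ∀ p ∈ X, ∃ u, ValidNode2 k u ∧ xl u = p := by
    intro p hp
    rw [← hLx.2] at hp
    obtain ⟨u, hu, rfl⟩ := hp
    exact ⟨u, hu, rfl⟩
  choose g hg1 hg2 using hsurj
  set f : Pt → Pt := fun p => if h : p ∈ X then yl (g p h) else p with hf
  have key : ∀ u : Node2, ValidNode2 k u → f (xl u) = yl u := by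
    intro u hu
    have hx : xl u ∈ X := aux_xmem2 hLx hu
    have hgs : g (xl u) hx = u := hLx.1 (hg1 _ hx) hu (hg2 _ hx)
    simp only [hf, dif_pos hx, hgs]
  have hfval : ∀ p (hp : p ∈ X), f p = yl (g p hp) := by
    intro p hp; simp only [hf, dif_pos hp]
  refine ⟨f, ⟨?_, ?_, ?_⟩, key, ?_⟩
  · intro p hp
    rw [hfval p hp, ← hLy.2]
    exact ⟨_, hg1 _ hp, rfl⟩
  · intro p hp p' hp' h
    rw [hfval p hp, hfval p' hp'] at h
    have := hLy.1 (hg1 _ hp) (hg1 _ hp') h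
    rw [← hg2 _ hp, ← hg2 _ hp', this]
  · intro q hq
    rw [← hLy.2] at hq
    obtain ⟨u, hu, rfl⟩ := hq
    exact ⟨xl u, aux_xmem2 hLx hu, key u hu⟩
  · intro a ha b hb c hc hab hac hbc
    have ea : xl (g a ha) = a := hg2 _ ha
    have eb : xl (g b hb) = b := hg2 _ hb
    have ec : xl (g c hc) = c := hg2 _ hc
    have d1 : g a ha ≠ g b hb := fun h => hab (by rw [← ea, ← eb, h])
    have d2 : g a ha ≠ g c hc := fun h => hac (by rw [← ea, ← ec, h])
    have d3 : g b hb ≠ g c hc := fun h => hbc (by rw [← eb, ← ec, h])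
    have hm := aux_main2 hLx hIx hEx hLy hIy hEy (hg1 _ ha) (hg1 _ hb) (hg1 _ hc) d1 d2 d3
    rw [ea, eb, ec] at hm
    rw [hfval a ha, hfval b hb, hfval c hc]
    exact hm

end AuxMain2

/-- (Lemma 8.) If `X` and `Y` admit nested labelings into the same tree
(of the same type), each an internal and external separation, then the bijection
`f = ψ_Y⁻¹ ∘ ψ_X` preserves orientations: the order type is determined by the tree. -/
theorem labeling_determines_order_type (k : ℕ) (X Y : Set Pt)
    (hXfin : X.Finite) (hYfin : Y.Finite) (hXne : X.Nonempty) (hYne : Y.Nonempty)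
    (hgX : GenPos X) (hgY : GenPos Y) (hkX : HasLayers X k) (hkY : HasLayers Y k) :
    (∀ (xl yl : List Bool → Pt),
      IsLabeling1 k X xl → Nested1 k X xl → InternalSep1 k X xl → ExternalSep1 k X xl →
      IsLabeling1 k Y yl → Nested1 k Y yl → InternalSep1 k Y yl → ExternalSep1 k Y yl →
      ∃ f : Pt → Pt, Set.BijOn f X Y ∧ (∀ s : List Bool, ValidNode1 k s → f (xl s) = yl s) ∧
        ∀ a ∈ X, ∀ b ∈ X, ∀ c ∈ X, a ≠ b → a ≠ c → b ≠ c →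
          (0 < orient a b c ↔ 0 < orient (f a) (f b) (f c))) ∧
    (∀ (xl yl : Node2 → Pt),
      IsLabeling2 k X xl → Nested2 k X xl → InternalSep2 k X xl → ExternalSep2 k X xl →
      IsLabeling2 k Y yl → Nested2 k Y yl → InternalSep2 k Y yl → ExternalSep2 k Y yl →
      ∃ f : Pt → Pt, Set.BijOn f X Y ∧ (∀ u : Node2, ValidNode2 k u → f (xl u) = yl u) ∧
        ∀ a ∈ X, ∀ b ∈ X, ∀ c ∈ X, a ≠ b → a ≠ c → b ≠ c →
          (0 < orient a b c ↔ 0 < orient (f a) (f b) (f c))) := by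
  constructor
  · intro xl yl hLx _ hIx hEx hLy _ hIy hEy
    exact aux_build1 xl yl hLx hIx hEx hLy hIy hEy
  · intro xl yl hLx _ hIx hEx hLy _ hIy hEy
    exact aux_build2 xl yl hLx hIx hEx hLy hIy hEy
end
end

section
/- Let X ⊆ ℝ² be a finite set in general position with exactly k convex layers, and let ψ be a nested, adoptable labeling of X. Then for every node u of the tree and every labeled proper descendant v of u, the point x_v lies in the convex hull of R_k(u). -/
open Set

noncomputable section

lemma natOfStr_append (s : List Bool) (b : Bool) :
    natOfStr (s ++ [b]) = 2 * natOfStr s + b.toNat := by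
  simp [natOfStr, List.foldl_append]

lemma natOfStr_lt (s : List Bool) : natOfStr s < 2 ^ s.length := by
  induction s using List.reverseRecOn with
  | nil => simp [natOfStr]
  | append_singleton t b ih =>
    rw [natOfStr_append]
    have : b.toNat ≤ 1 := Bool.toNat_le b
    simp only [List.length_append, List.length_singleton, pow_succ]
    omega

lemma strOfNat_succ (j i : ℕ) :
    strOfNat (j + 1) i = strOfNat j (i / 2) ++ [i.testBit 0] := by
  unfold strOfNat
  rw [List.range_succ, List.map_append]
  congr 1
  · apply List.map_congr_left
    intro t ht
    rw [List.mem_range] at ht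
    have h1 : j + 1 - 1 - t = (j - 1 - t) + 1 := by omega
    rw [h1, Nat.testBit_succ]
  · simp

lemma strOfNat_natOfStr (s : List Bool) : strOfNat s.length (natOfStr s) = s := by
  induction s using List.reverseRecOn with
  | nil => simp [strOfNat, natOfStr]
  | append_singleton t b ih =>
    rw [List.length_append, List.length_singleton, strOfNat_succ, natOfStr_append]
    have hb : b.toNat ≤ 1 := Bool.toNat_le b
    have h1 : (2 * natOfStr t + b.toNat) / 2 = natOfStr t := by omega
    have h2 : (2 * natOfStr t + b.toNat).testBit 0 = b := by
      rw [Nat.testBit_zero]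
      cases b <;> simp <;> omega
    rw [h1, h2, ih]
lemma key1 {X : Set Pt} {k : ℕ} {x : List Bool → Pt}
    (hl : IsLabeling1 k X x) (hn : Nested1 k X x) (ha : Adoptable1 k X x) :
    ∀ (d : ℕ) (u : List Bool) (b : Bool), u.length + 1 + d = k →
      x (u ++ [b]) ∈ convexHull ℝ (x '' {w : List Bool | w.length = k ∧ u <+: w}) := by
  intro d
  induction d with
  | zero =>
    intro u b h
    exact subset_convexHull ℝ _ ⟨u ++ [b], ⟨by simp; omega, List.prefix_append _ _⟩, rfl⟩
  | succ d ih =>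
    intro u b h
    have hmono : ∀ b' : Bool,
        (x '' {w : List Bool | w.length = k ∧ (u ++ [b']) <+: w}) ⊆
          x '' {w : List Bool | w.length = k ∧ u <+: w} :=
      fun b' => Set.image_mono (fun w hw => ⟨hw.1, (List.prefix_append u [b']).trans hw.2⟩)
    have hchild : ∀ b' b'' : Bool,
        x ((u ++ [b']) ++ [b'']) ∈ convexHull ℝ (x '' {w : List Bool | w.length = k ∧ u <+: w}) :=
      fun b' b'' => convexHull_mono (hmono b') (ih (u ++ [b']) b'' (by simp; omega))
    -- the third point q3 : a nephew
    set w3 : List Bool := (u ++ [!b]) ++ [false] with hw3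
    have hlenw3 : w3.length = u.length + 2 := by simp [hw3]
    -- q3 is in the layer
    obtain ⟨-, hrange, -⟩ := hn (u.length + 2) (by omega) (by omega)
    have hmem : x w3 ∈ layer X k (u.length + 2) := by
      rw [← hrange]
      refine ⟨⟨natOfStr w3, by rw [← hlenw3]; exact natOfStr_lt w3⟩, ?_⟩
      show x (strOfNat (u.length + 2) (natOfStr w3)) = x w3
      rw [← hlenw3, strOfNat_natOfStr]
    -- q3 differs from the two children
    have hne : ∀ b'' : Bool, x w3 ≠ x ((u ++ [b]) ++ [b'']) := by
      intro b'' hq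
      have hv1 : w3 ∈ {s | ValidNode1 k s} := ⟨by simp [hw3], by rw [hlenw3]; omega⟩
      have hv2 : (u ++ [b]) ++ [b''] ∈ {s | ValidNode1 k s} := ⟨by simp, by simp; omega⟩
      have heq := hl.1 hv1 hv2 hq
      rw [hw3, List.append_assoc, List.append_assoc] at heq
      have := List.append_cancel_left heq
      simp at this
    -- adoptability
    have hadopt := ha (u ++ [b]) (by simp) (by simp; omega)
    simp only [List.length_append, List.length_singleton] at hadopt
    have hint := hadopt (x w3) ⟨hmem, by
      simp only [Set.mem_insert_iff, Set.mem_singleton_iff, not_or]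
      exact ⟨hne false, hne true⟩⟩
    have hsub : ({x ((u ++ [b]) ++ [false]), x ((u ++ [b]) ++ [true]), x w3} : Set Pt) ⊆
        convexHull ℝ (x '' {w : List Bool | w.length = k ∧ u <+: w}) := by
      intro p hp
      rcases hp with rfl | rfl | rfl
      · exact hchild b false
      · exact hchild b true
      · exact hchild (!b) false
    exact convexHull_min hsub (convex_convexHull ℝ _) (interior_subset hint)
lemma main1 {X : Set Pt} {k : ℕ} {x : List Bool → Pt}
    (hl : IsLabeling1 k X x) (hn : Nested1 k X x) (ha : Adoptable1 k X x) :
    ∀ s t : List Bool, s.length ≤ k → ValidNode1 k t → s <+: t → s ≠ t →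
      x t ∈ convexHull ℝ (x '' {w : List Bool | w.length = k ∧ s <+: w}) := by
  intro s t hs hvt hpre hnest
  by_cases ht : t.length = k
  · exact subset_convexHull ℝ _ ⟨t, ⟨ht, hpre⟩, rfl⟩
  · have h1 : 1 ≤ t.length := hvt.1
    have h2 : t.length ≤ k := hvt.2
    have htne : t ≠ [] := by intro h; rw [h] at h1; simp at h1
    have hslt : s.length < t.length := by
      rcases lt_or_eq_of_le hpre.length_le with h | h
      · exact h
      · exact absurd (hpre.eq_of_length h) hnest
    have hkey := key1 hl hn ha (k - t.length) t.dropLast (t.getLast htne)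
      (by rw [List.length_dropLast]; omega)
    rw [List.dropLast_append_getLast htne] at hkey
    have hsd : s <+: t.dropLast :=
      List.prefix_of_prefix_length_le hpre (List.dropLast_prefix t)
        (by rw [List.length_dropLast]; omega)
    have hsub2 : {w : List Bool | w.length = k ∧ t.dropLast <+: w} ⊆
        {w : List Bool | w.length = k ∧ s <+: w} := fun w hw => ⟨hw.1, hsd.trans hw.2⟩
    exact convexHull_mono (Set.image_mono hsub2) hkey

lemma node2At_eq (j : ℕ) (c : Fin 3) (w : List Bool) (hw : w.length = j) :
    node2At j (c.val * 2 ^ j + natOfStr w) = some (c, w) := by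
  have hlt : natOfStr w < 2 ^ j := hw ▸ natOfStr_lt w
  have h1 : (c.val * 2 ^ j + natOfStr w) % 2 ^ j = natOfStr w := by
    rw [mul_comm, Nat.mul_add_mod, Nat.mod_eq_of_lt hlt]
  have h2 : (c.val * 2 ^ j + natOfStr w) / 2 ^ j = c.val := by
    rw [mul_comm, Nat.mul_add_div (pow_pos (by norm_num) j), Nat.div_eq_of_lt hlt]
    omega
  have e1 : strOfNat j ((c.val * 2 ^ j + natOfStr w) % 2 ^ j) = w := by
    rw [h1, ← hw, strOfNat_natOfStr]
  unfold node2At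
  refine congrArg some (Prod.ext (Fin.ext ?_) e1)
  show (c.val * 2 ^ j + natOfStr w) / 2 ^ j % 3 = c.val
  rw [h2, Nat.mod_eq_of_lt c.isLt]

lemma node2At_lt (j : ℕ) (c : Fin 3) (w : List Bool) (hw : w.length = j) :
    c.val * 2 ^ j + natOfStr w < 3 * 2 ^ j := by
  have hlt : natOfStr w < 2 ^ j := hw ▸ natOfStr_lt w
  have hc : c.val + 1 ≤ 3 := c.isLt
  calc c.val * 2 ^ j + natOfStr w < c.val * 2 ^ j + 2 ^ j := by omega
    _ = (c.val + 1) * 2 ^ j := by ring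
    _ ≤ 3 * 2 ^ j := Nat.mul_le_mul_right _ hc

lemma key2 {X : Set Pt} {k : ℕ} {x : Node2 → Pt}
    (hl : IsLabeling2 k X x) (hn : Nested2 k X x) (ha : Adoptable2 k X x) :
    ∀ (d : ℕ) (c : Fin 3) (s : List Bool) (b : Bool), s.length + 3 + d = k →
      x (some (c, s ++ [b])) ∈ convexHull ℝ
        (x '' {u : Node2 | ∃ w : List Bool, u = some (c, w) ∧ w.length + 2 = k ∧ s <+: w}) := by
  intro d
  induction d with
  | zero =>
    intro c s b h
    exact subset_convexHull ℝ _
      ⟨some (c, s ++ [b]), ⟨s ++ [b], rfl, by simp; omega, List.prefix_append _ _⟩, rfl⟩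
  | succ d ih =>
    intro c s b h
    have hmono : ∀ b' : Bool,
        (x '' {u : Node2 | ∃ w, u = some (c, w) ∧ w.length + 2 = k ∧ (s ++ [b']) <+: w}) ⊆
          x '' {u : Node2 | ∃ w, u = some (c, w) ∧ w.length + 2 = k ∧ s <+: w} :=
      fun b' => Set.image_mono (fun u hu => by
        obtain ⟨w, rfl, hw, hp⟩ := hu
        exact ⟨w, rfl, hw, (List.prefix_append s [b']).trans hp⟩)
    have hchild : ∀ b' b'' : Bool,
        x (some (c, (s ++ [b']) ++ [b''])) ∈ convexHull ℝ
          (x '' {u : Node2 | ∃ w, u = some (c, w) ∧ w.length + 2 = k ∧ s <+: w}) :=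
      fun b' b'' => convexHull_mono (hmono b') (ih c (s ++ [b']) b'' (by simp; omega))
    set w3 : List Bool := (s ++ [!b]) ++ [false] with hw3
    have hlenw3 : w3.length = s.length + 2 := by simp [hw3]
    obtain ⟨-, hrange, -⟩ := hn.2 (s.length + 2) (by omega)
    have hmem : x (some (c, w3)) ∈ layer X k (s.length + 2 + 2) := by
      rw [← hrange]
      exact ⟨⟨c.val * 2 ^ (s.length + 2) + natOfStr w3, node2At_lt _ c w3 hlenw3⟩,
        congrArg x (node2At_eq _ c w3 hlenw3)⟩
    have hne : ∀ b'' : Bool, x (some (c, w3)) ≠ x (some (c, (s ++ [b]) ++ [b''])) := by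
      intro b'' hq
      have hv1 : (some (c, w3) : Node2) ∈ {u | ValidNode2 k u} := by
        show w3.length + 2 ≤ k; rw [hlenw3]; omega
      have hv2 : (some (c, (s ++ [b]) ++ [b'']) : Node2) ∈ {u | ValidNode2 k u} := by
        show ((s ++ [b]) ++ [b'']).length + 2 ≤ k; simp; omega
      have heq := hl.1 hv1 hv2 hq
      rw [hw3] at heq
      simp only [Option.some.injEq, Prod.mk.injEq, true_and] at heq
      rw [List.append_assoc, List.append_assoc] at heq
      have := List.append_cancel_left heq
      simp at this
    have hadopt := ha c (s ++ [b]) (by simp; omega)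
    simp only [List.length_append, List.length_singleton] at hadopt
    have hint := hadopt (x (some (c, w3))) ⟨by
        have : s.length + 1 + 3 = s.length + 2 + 2 := by omega
        rw [this]; exact hmem, by
      simp only [Set.mem_insert_iff, Set.mem_singleton_iff, not_or]
      exact ⟨hne false, hne true⟩⟩
    have hsub : ({x (some (c, (s ++ [b]) ++ [false])), x (some (c, (s ++ [b]) ++ [true])),
        x (some (c, w3))} : Set Pt) ⊆ convexHull ℝ
          (x '' {u : Node2 | ∃ w, u = some (c, w) ∧ w.length + 2 = k ∧ s <+: w}) := by
      intro p hp
      rcases hp with rfl | rfl | rfl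
      · exact hchild b false
      · exact hchild b true
      · exact hchild (!b) false
    exact convexHull_min hsub (convex_convexHull ℝ _) (interior_subset hint)
lemma main2b {X : Set Pt} {k : ℕ} {x : Node2 → Pt}
    (hl : IsLabeling2 k X x) (hn : Nested2 k X x) (ha : Adoptable2 k X x) :
    ∀ (c : Fin 3) (s t : List Bool), s.length + 2 ≤ k → t.length + 2 ≤ k →
      s <+: t → s ≠ t →
      x (some (c, t)) ∈ convexHull ℝ
        (x '' {u : Node2 | ∃ w : List Bool, u = some (c, w) ∧ w.length + 2 = k ∧ s <+: w}) := by
  intro c s t hs ht hpre hnest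
  by_cases hteq : t.length + 2 = k
  · exact subset_convexHull ℝ _ ⟨some (c, t), ⟨t, rfl, hteq, hpre⟩, rfl⟩
  · have htne : t ≠ [] := by
      intro h
      rw [h] at hpre
      exact hnest (List.prefix_nil.mp hpre ▸ h.symm ▸ rfl)
    have h1 : 1 ≤ t.length := List.length_pos_iff.mpr htne
    have hslt : s.length < t.length := by
      rcases lt_or_eq_of_le hpre.length_le with h | h
      · exact h
      · exact absurd (hpre.eq_of_length h) hnest
    have hkey := key2 hl hn ha (k - t.length - 2) c t.dropLast (t.getLast htne)
      (by rw [List.length_dropLast]; omega)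
    rw [List.dropLast_append_getLast htne] at hkey
    have hsd : s <+: t.dropLast :=
      List.prefix_of_prefix_length_le hpre (List.dropLast_prefix t)
        (by rw [List.length_dropLast]; omega)
    have hsub2 : {u : Node2 | ∃ w, u = some (c, w) ∧ w.length + 2 = k ∧ t.dropLast <+: w} ⊆
        {u : Node2 | ∃ w, u = some (c, w) ∧ w.length + 2 = k ∧ s <+: w} := by
      rintro u ⟨w, rfl, hw, hp⟩
      exact ⟨w, rfl, hw, hsd.trans hp⟩
    exact convexHull_mono (Set.image_mono hsub2) hkey

lemma main2a {X : Set Pt} {k : ℕ} {x : Node2 → Pt}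
    (hl : IsLabeling2 k X x) (hn : Nested2 k X x) (ha : Adoptable2 k X x) :
    ∀ v : Node2, ValidNode2 k v → v ≠ none →
      x v ∈ convexHull ℝ
        (x '' {u : Node2 | ∃ (c : Fin 3) (t : List Bool), u = some (c, t) ∧ t.length + 2 = k}) := by
  intro v hv hvne
  match v with
  | none => exact absurd rfl hvne
  | some (c, t) =>
    have hvt : t.length + 2 ≤ k := hv
    have hsubT : ∀ c' : Fin 3, ∀ s : List Bool,
        (x '' {u : Node2 | ∃ w, u = some (c', w) ∧ w.length + 2 = k ∧ s <+: w}) ⊆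
          x '' {u : Node2 | ∃ (c : Fin 3) (t : List Bool), u = some (c, t) ∧ t.length + 2 = k} := by
      rintro c' s p ⟨u, ⟨w, rfl, hw, -⟩, rfl⟩
      exact ⟨some (c', w), ⟨c', w, rfl, hw⟩, rfl⟩
    by_cases hteq : t.length + 2 = k
    · exact subset_convexHull ℝ _ ⟨some (c, t), ⟨c, t, rfl, hteq⟩, rfl⟩
    by_cases htnil : t = []
    · -- t = [], so k ≥ 3; use adoptability at (c, []) with a cousin from branch c+1
      subst htnil
      have hk3 : 3 ≤ k := by simp only [List.length_nil] at hvt hteq; omega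
      have hchild : ∀ b : Bool, x (some (c, [] ++ [b])) ∈ convexHull ℝ
          (x '' {u : Node2 | ∃ (c : Fin 3) (t : List Bool), u = some (c, t) ∧ t.length + 2 = k}) :=
        fun b => convexHull_mono (hsubT c []) (key2 hl hn ha (k - 3) c [] b (by simp; omega))
      have hcousin : x (some (c + 1, [] ++ [false])) ∈ convexHull ℝ
          (x '' {u : Node2 | ∃ (c : Fin 3) (t : List Bool), u = some (c, t) ∧ t.length + 2 = k}) :=
        convexHull_mono (hsubT (c + 1) []) (key2 hl hn ha (k - 3) (c + 1) [] false (by simp; omega))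
      obtain ⟨-, hrange, -⟩ := hn.2 1 (by omega)
      have hmem : x (some (c + 1, [false])) ∈ layer X k (1 + 2) := by
        rw [← hrange]
        exact ⟨⟨(c + 1).val * 2 ^ 1 + natOfStr [false], node2At_lt _ _ _ rfl⟩,
          congrArg x (node2At_eq 1 (c + 1) [false] rfl)⟩
      have hcc : c + 1 ≠ c := by
        intro hcc
        have := congrArg Fin.val hcc
        simp [Fin.add_def] at this
        omega
      have hne : ∀ b : Bool, x (some (c + 1, [false])) ≠ x (some (c, [b])) := by
        intro b hq
        have hv1 : (some (c + 1, [false]) : Node2) ∈ {u | ValidNode2 k u} := by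
          show ([false] : List Bool).length + 2 ≤ k; simp; omega
        have hv2 : (some (c, [b]) : Node2) ∈ {u | ValidNode2 k u} := by
          show ([b] : List Bool).length + 2 ≤ k; simp; omega
        have heq := hl.1 hv1 hv2 hq
        simp only [Option.some.injEq, Prod.mk.injEq] at heq
        exact hcc heq.1
      have hadopt := ha c [] (by simp; omega)
      simp only [List.length_nil, List.nil_append] at hadopt
      have hint := hadopt (x (some (c + 1, [false]))) ⟨by
          have h13 : (0 : ℕ) + 3 = 1 + 2 := by omega
          rw [h13]; exact hmem, by
        simp only [Set.mem_insert_iff, Set.mem_singleton_iff, not_or]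
        exact ⟨hne false, hne true⟩⟩
      have hsub : ({x (some (c, [false])), x (some (c, [true])),
          x (some (c + 1, [false]))} : Set Pt) ⊆ convexHull ℝ
            (x '' {u : Node2 | ∃ (c : Fin 3) (t : List Bool),
              u = some (c, t) ∧ t.length + 2 = k}) := by
        intro p hp
        rcases hp with rfl | rfl | rfl
        · simpa using hchild false
        · simpa using hchild true
        · simpa using hcousin
      exact convexHull_min hsub (convex_convexHull ℝ _) (interior_subset hint)
    · -- t ≠ []: use key2 at the parent of t
      have h1 : 1 ≤ t.length := List.length_pos_iff.mpr htnil
      have hkey := key2 hl hn ha (k - t.length - 2) c t.dropLast (t.getLast htnil)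
        (by rw [List.length_dropLast]; omega)
      rw [List.dropLast_append_getLast htnil] at hkey
      exact convexHull_mono (hsubT c t.dropLast) hkey

/-- (Lemma 3.) For a nested, adoptable labeling, the label of every labeled
proper descendant of a node `u` lies in the convex hull of `R_k(u)`. -/
theorem label_mem_hull_Rk (X : Set Pt) (k : ℕ)
    (hfin : X.Finite) (hne : X.Nonempty) (hgp : GenPos X) (hk : HasLayers X k) :
    (∀ x : List Bool → Pt, IsLabeling1 k X x → Nested1 k X x → Adoptable1 k X x →
      ∀ s t : List Bool, s.length ≤ k → ValidNode1 k t → s <+: t → s ≠ t →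
        x t ∈ convexHull ℝ (x '' {w : List Bool | w.length = k ∧ s <+: w})) ∧
    (∀ x : Node2 → Pt, IsLabeling2 k X x → Nested2 k X x → Adoptable2 k X x →
      (∀ v : Node2, ValidNode2 k v → v ≠ none →
        x v ∈ convexHull ℝ
          (x '' {u : Node2 | ∃ (c : Fin 3) (t : List Bool),
            u = some (c, t) ∧ t.length + 2 = k})) ∧
      (∀ (c : Fin 3) (s t : List Bool), s.length + 2 ≤ k → t.length + 2 ≤ k →
        s <+: t → s ≠ t →
        x (some (c, t)) ∈ convexHull ℝ
          (x '' {u : Node2 | ∃ w : List Bool,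
            u = some (c, w) ∧ w.length + 2 = k ∧ s <+: w}))) := by
  exact ⟨fun x hl hn ha => main1 hl hn ha,
    fun x hl hn ha => ⟨main2a hl hn ha, main2b hl hn ha⟩⟩
end
end

section
/- In the corner construction: the 2^(k+1) points y_v, where v ranges over all binary strings of length k+1, are pairwise distinct and, listed in lexicographic order of v, are in convex position in counterclockwise order; that is, for all binary strings v₁ < v₂ < v₃ of length k+1 (lexicographic order), orient(y_{v₁}, y_{v₂}, y_{v₃}) > 0. -/
open Set

noncomputable section

namespace CC

variable (k : ℕ)

def OO (s : List Bool) : Pt := (corner k s).2.1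
def UU (s : List Bool) : Pt := (corner k s).1 - (corner k s).2.1
def WW (s : List Bool) : Pt := (corner k s).2.2 - (corner k s).2.1
def cross (v w : Pt) : ℝ := v.1 * w.2 - v.2 * w.1

lemma corner_concat (s : List Bool) (b : Bool) :
    corner k (s ++ [b]) = cornerStep (corner k s) b := by
  unfold corner; rw [List.foldl_append]; rfl

lemma O_false (s : List Bool) : OO k (s ++ [false]) = OO k s + (1/5 : ℝ) • UU k s := by
  simp [OO, UU, corner_concat, cornerStep]

lemma O_true (s : List Bool) : OO k (s ++ [true]) = OO k s + (1/5 : ℝ) • WW k s := by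
  simp [OO, WW, corner_concat, cornerStep]

lemma U_false (s : List Bool) : UU k (s ++ [false]) = (1/5 : ℝ) • UU k s := by
  simp [UU, corner_concat, cornerStep]; module

lemma W_false (s : List Bool) : WW k (s ++ [false]) = (1/5 : ℝ) • (WW k s - UU k s) := by
  simp [WW, UU, corner_concat, cornerStep]; module

lemma U_true (s : List Bool) : UU k (s ++ [true]) = (1/5 : ℝ) • (UU k s - WW k s) := by
  simp [UU, WW, corner_concat, cornerStep]; module

lemma W_true (s : List Bool) : WW k (s ++ [true]) = (1/5 : ℝ) • WW k s := by
  simp [WW, corner_concat, cornerStep]; module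

lemma crossWU (s : List Bool) : 0 < cross (WW k s) (UU k s) := by
  induction s using List.reverseRecOn with
  | nil =>
      have h5 : (0:ℝ) < 2 * 5 ^ (k+1) := by positivity
      simp only [cross, WW, UU, corner, List.foldl_nil]
      norm_num
  | append_singleton s b ih =>
      cases b
      · have : cross (WW k (s ++ [false])) (UU k (s ++ [false]))
            = (1/25) * cross (WW k s) (UU k s) := by
          simp [W_false, U_false, cross, Prod.smul_fst, Prod.smul_snd, smul_eq_mul,
            Prod.fst_sub, Prod.snd_sub]
          ring
        rw [this]; linarith
      · have : cross (WW k (s ++ [true])) (UU k (s ++ [true]))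
            = (1/25) * cross (WW k s) (UU k s) := by
          simp [W_true, U_true, cross, Prod.smul_fst, Prod.smul_snd, smul_eq_mul,
            Prod.fst_sub, Prod.snd_sub]
          ring
        rw [this]; linarith

/-! ### cross algebra -/

lemma cross_add_right (u v w : Pt) : cross u (v + w) = cross u v + cross u w := by
  simp [cross, Prod.fst_add, Prod.snd_add]; ring

lemma cross_add_left (u v w : Pt) : cross (u + v) w = cross u w + cross v w := by
  simp [cross, Prod.fst_add, Prod.snd_add]; ring

lemma cross_zero_right (u : Pt) : cross u 0 = 0 := by simp [cross]

lemma cross_zero_left (u : Pt) : cross 0 u = 0 := by simp [cross]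

lemma cross_rep (W U : Pt) (p₁ q₁ p₂ q₂ : ℝ) :
    cross (q₁ • W - p₁ • U) (q₂ • W - p₂ • U) = (p₁ * q₂ - p₂ * q₁) * cross W U := by
  simp [cross, Prod.smul_fst, Prod.smul_snd, Prod.fst_sub, Prod.snd_sub, smul_eq_mul]
  ring

lemma cross_rep_U (W U : Pt) (p q : ℝ) :
    cross (q • W - p • U) U = q * cross W U := by
  simp [cross, Prod.smul_fst, Prod.smul_snd, Prod.fst_sub, Prod.snd_sub, smul_eq_mul]
  ring

lemma orient_eq (A B C : Pt) : orient A B C = cross (B - A) (C - B) := by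
  simp [orient, cross, Prod.fst_sub, Prod.snd_sub]; ring

/-! ### endpoints of subtrees -/

def sg (m : ℕ) : ℝ := (1 - (1/5 : ℝ)^m)/4
def mu (m : ℕ) : ℝ := (1 + (1/5 : ℝ)^m)/10

lemma mu_pos (m : ℕ) : 0 < mu m := by unfold mu; positivity

lemma U_replf (r : List Bool) (m : ℕ) :
    UU k (r ++ List.replicate m false) = ((1/5 : ℝ)^m) • UU k r := by
  induction m with
  | zero => simp
  | succ m ih =>
      rw [List.replicate_succ', ← List.append_assoc, U_false, ih, smul_smul, pow_succ]
      ring_nf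

lemma W_replt (r : List Bool) (m : ℕ) :
    WW k (r ++ List.replicate m true) = ((1/5 : ℝ)^m) • WW k r := by
  induction m with
  | zero => simp
  | succ m ih =>
      rw [List.replicate_succ', ← List.append_assoc, W_true, ih, smul_smul, pow_succ]
      ring_nf

lemma O_replf (r : List Bool) (m : ℕ) :
    OO k (r ++ List.replicate m false) = OO k r + sg m • UU k r := by
  induction m with
  | zero => simp [sg]
  | succ m ih =>
      rw [List.replicate_succ', ← List.append_assoc, O_false, ih, U_replf]
      simp only [sg, pow_succ]
      module

lemma O_replt (r : List Bool) (m : ℕ) :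
    OO k (r ++ List.replicate m true) = OO k r + sg m • WW k r := by
  induction m with
  | zero => simp [sg]
  | succ m ih =>
      rw [List.replicate_succ', ← List.append_assoc, O_true, ih, W_replt]
      simp only [sg, pow_succ]
      module

/-- the boundary edge between the subtree of `r ++ [false]` and of `r ++ [true]` -/
lemma FL (r : List Bool) (m : ℕ) :
    OO k ((r ++ [true]) ++ List.replicate m false)
      - OO k ((r ++ [false]) ++ List.replicate m true)
      = mu m • WW k r - mu m • UU k r := by
  rw [O_replf, O_replt, O_true, O_false, U_true, W_false]
  simp only [mu, sg]
  module

/-! ### coordinate conversions -/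

lemma conv0 (r : List Bool) (p q : ℝ) :
    q • WW k (r ++ [false]) - p • UU k (r ++ [false])
      = (q/5) • WW k r - ((p + q)/5) • UU k r := by
  rw [W_false, U_false]; module

lemma conv1 (r : List Bool) (p q : ℝ) :
    q • WW k (r ++ [true]) - p • UU k (r ++ [true])
      = ((p + q)/5) • WW k r - (p/5) • UU k r := by
  rw [W_true, U_true]; module

/-! ### lex order facts -/

lemma lex_bot : ∀ b : List Bool,
    b = List.replicate b.length false ∨ List.Lex (·<·) (List.replicate b.length false) b := by
  intro b
  induction b with
  | nil => left; rfl
  | cons x t ih =>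
      cases x
      · rcases ih with h | h
        · left; rw [List.length_cons, List.replicate_succ]; exact congrArg _ h
        · right; rw [List.length_cons, List.replicate_succ]; exact List.Lex.cons h
      · right; rw [List.length_cons, List.replicate_succ]
        exact List.Lex.rel (by simp [Bool.lt_iff])

lemma lex_top : ∀ b : List Bool,
    b = List.replicate b.length true ∨ List.Lex (·<·) b (List.replicate b.length true) := by
  intro b
  induction b with
  | nil => left; rfl
  | cons x t ih =>
      cases x
      · right; rw [List.length_cons, List.replicate_succ]
        exact List.Lex.rel (by simp [Bool.lt_iff])
      · rcases ih with h | h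
        · left; rw [List.length_cons, List.replicate_succ]; exact congrArg _ h
        · right; rw [List.length_cons, List.replicate_succ]; exact List.Lex.cons h

lemma lex_total : ∀ a b : List Bool, a.length = b.length → a ≠ b →
    List.Lex (·<·) a b ∨ List.Lex (·<·) b a := by
  intro a
  induction a with
  | nil => intro b h hne; cases b with
      | nil => exact absurd rfl hne
      | cons y t => simp at h
  | cons x a' ih =>
      intro b h hne
      cases b with
      | nil => simp at h
      | cons y b' =>
          cases x <;> cases y
          · rcases ih b' (by simpa using h) (by rintro rfl; exact hne rfl) with h' | h'
            · exact Or.inl (List.Lex.cons h')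
            · exact Or.inr (List.Lex.cons h')
          · exact Or.inl (List.Lex.rel (by simp [Bool.lt_iff]))
          · exact Or.inr (List.Lex.rel (by simp [Bool.lt_iff]))
          · rcases ih b' (by simpa using h) (by rintro rfl; exact hne rfl) with h' | h'
            · exact Or.inl (List.Lex.cons h')
            · exact Or.inr (List.Lex.cons h')

/-! ### the difference representation -/

lemma diff_rep : ∀ (m : ℕ) (r a b : List Bool), a.length = m → b.length = m →
    List.Lex (·<·) a b →
    ∃ p q : ℝ, 0 < p ∧ 0 < q ∧
      OO k (r ++ b) - OO k (r ++ a) = q • WW k r - p • UU k r := by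
  intro m
  induction m with
  | zero =>
      intro r a b ha hb hl
      rw [List.length_eq_zero_iff] at ha hb
      subst ha; subst hb; cases hl
  | succ m ih =>
      intro r a b ha hb hl
      cases a with
      | nil => simp at ha
      | cons x a' =>
        cases b with
        | nil => simp at hb
        | cons y b' =>
          have ha' : a'.length = m := by simpa using ha
          have hb' : b'.length = m := by simpa using hb
          cases hl with
          | cons h =>
              obtain ⟨p, q, hp, hq, he⟩ := ih (r ++ [x]) a' b' ha' hb' h
              rw [List.append_cons r x a', List.append_cons r x b']
              cases x
              · exact ⟨(p + q)/5, q/5, by positivity, by positivity,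
                  by rw [he, conv0]⟩
              · exact ⟨p/5, (p + q)/5, by positivity, by positivity,
                  by rw [he, conv1]⟩
          | rel h =>
              rw [Bool.lt_iff] at h
              obtain ⟨rfl, rfl⟩ := h
              -- split into three pieces
              have key : OO k (r ++ true :: b') - OO k (r ++ false :: a')
                  = (OO k ((r ++ [true]) ++ b')
                      - OO k ((r ++ [true]) ++ List.replicate m false))
                    + (OO k ((r ++ [true]) ++ List.replicate m false)
                      - OO k ((r ++ [false]) ++ List.replicate m true))
                    + (OO k ((r ++ [false]) ++ List.replicate m true)
                      - OO k ((r ++ [false]) ++ a')) := by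
                rw [List.append_cons r true b', List.append_cons r false a']
                abel
              -- piece 1
              obtain ⟨p₁, q₁, hp₁, hq₁, he₁⟩ :
                  ∃ p q : ℝ, 0 ≤ p ∧ 0 ≤ q ∧
                    OO k ((r ++ [true]) ++ b')
                      - OO k ((r ++ [true]) ++ List.replicate m false)
                    = q • WW k r - p • UU k r := by
                rcases lex_bot b' with hb0 | hb0
                · rw [hb'] at hb0
                  refine ⟨0, 0, le_refl 0, le_refl 0, ?_⟩
                  rw [hb0]
                  module
                · rw [hb'] at hb0
                  obtain ⟨p, q, hp, hq, he⟩ := ih (r ++ [true])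
                    (List.replicate m false) b' (by simp) hb' hb0
                  exact ⟨p/5, (p + q)/5, by positivity, by positivity,
                    by rw [he, conv1]⟩
              -- piece 3
              obtain ⟨p₃, q₃, hp₃, hq₃, he₃⟩ :
                  ∃ p q : ℝ, 0 ≤ p ∧ 0 ≤ q ∧
                    OO k ((r ++ [false]) ++ List.replicate m true)
                      - OO k ((r ++ [false]) ++ a')
                    = q • WW k r - p • UU k r := by
                rcases lex_top a' with ha0 | ha0
                · rw [ha'] at ha0
                  refine ⟨0, 0, le_refl 0, le_refl 0, ?_⟩
                  rw [ha0]
                  module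
                · rw [ha'] at ha0
                  obtain ⟨p, q, hp, hq, he⟩ := ih (r ++ [false])
                    a' (List.replicate m true) ha' (by simp) ha0
                  exact ⟨(p + q)/5, q/5, by positivity, by positivity,
                    by rw [he, conv0]⟩
              refine ⟨p₁ + mu m + p₃, q₁ + mu m + q₃, ?_, ?_, ?_⟩
              · have := mu_pos m; linarith
              · have := mu_pos m; linarith
              · rw [key, he₁, he₃, FL]
                module


lemma triple : ∀ (m : ℕ) (r a b c : List Bool), a.length = m → b.length = m → c.length = m →
    List.Lex (·<·) a b → List.Lex (·<·) b c →
    0 < cross (OO k (r ++ b) - OO k (r ++ a)) (OO k (r ++ c) - OO k (r ++ b)) := by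
  intro m
  induction m with
  | zero =>
      intro r a b c ha hb hc hab hbc
      rw [List.length_eq_zero_iff] at ha hb
      subst ha; subst hb; cases hab
  | succ m ih =>
      intro r a b c ha hb hc hab hbc
      cases a with
      | nil => simp at ha
      | cons x a' =>
      cases b with
      | nil => simp at hb
      | cons y b' =>
      cases c with
      | nil => simp at hc
      | cons z c' =>
      have ha' : a'.length = m := by simpa using ha
      have hb' : b'.length = m := by simpa using hb
      have hc' : c'.length = m := by simpa using hc
      have hWU := crossWU k r
      cases hab with
      | cons hab' =>
          cases hbc with
          | cons hbc' =>
              rw [List.append_cons r x a', List.append_cons r x b', List.append_cons r x c']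
              exact ih (r ++ [x]) a' b' c' ha' hb' hc' hab' hbc'
          | rel h =>
              rw [Bool.lt_iff] at h
              obtain ⟨rfl, rfl⟩ := h
              -- heads (false, false, true)
              rw [List.append_cons r false a', List.append_cons r false b',
                List.append_cons r true c']
              set r0 := r ++ [false] with hr0
              set r1 := r ++ [true] with hr1
              set A := OO k (r0 ++ a') with hA
              set B := OO k (r0 ++ b') with hB
              set C := OO k (r1 ++ c') with hC
              set L := OO k (r0 ++ List.replicate m true) with hL
              set F := OO k (r1 ++ List.replicate m false) with hF
              have hsplit : C - B = (C - F) + ((F - L) + (L - B)) := by abel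
              rw [hsplit, cross_add_right, cross_add_right]
              obtain ⟨p, q, hp, hq, he⟩ := diff_rep k m r0 a' b' ha' hb' hab'
              have heBA : B - A = (q/5) • WW k r - ((p+q)/5) • UU k r := by
                rw [hA, hB, he, hr0, conv0]
              have hFL : F - L = mu m • WW k r - mu m • UU k r := FL k r m
              have t2 : 0 < cross (B - A) (F - L) := by
                rw [heBA, hFL, cross_rep]
                have hmu := mu_pos m
                have hf : (0:ℝ) < (p+q)/5 * mu m - mu m * (q/5) := by
                  have : (p+q)/5 * mu m - mu m * (q/5) = mu m * (p/5) := by ring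
                  rw [this]; positivity
                exact mul_pos hf hWU
              have t1 : 0 ≤ cross (B - A) (C - F) := by
                rcases lex_bot c' with hc0 | hc0
                · rw [hc'] at hc0
                  have : C - F = 0 := by rw [hC, hF, hc0]; abel
                  rw [this, cross_zero_right]
                · rw [hc'] at hc0
                  obtain ⟨p', q', hp', hq', he'⟩ :=
                    diff_rep k m r1 (List.replicate m false) c' (by simp) hc' hc0
                  have heCF : C - F = ((p'+q')/5) • WW k r - (p'/5) • UU k r := by
                    rw [hC, hF, he', hr1, conv1]
                  rw [heBA, heCF, cross_rep]
                  have hf : (0:ℝ) < (p+q)/5 * ((p'+q')/5) - p'/5 * (q/5) := by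
                    nlinarith [mul_pos hp hp', mul_pos hp hq', mul_pos hq hq']
                  positivity
              have t3 : 0 ≤ cross (B - A) (L - B) := by
                rcases lex_top b' with hb0 | hb0
                · rw [hb'] at hb0
                  have : L - B = 0 := by rw [hL, hB, hb0]; abel
                  rw [this, cross_zero_right]
                · rw [hb'] at hb0
                  exact le_of_lt (ih r0 a' b' (List.replicate m true) ha' hb' (by simp)
                    hab' hb0)
              linarith
      | rel h =>
          rw [Bool.lt_iff] at h
          obtain ⟨rfl, rfl⟩ := h
          cases hbc with
          | cons hbc' =>
              -- heads (false, true, true)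
              rw [List.append_cons r false a', List.append_cons r true b',
                List.append_cons r true c']
              set r0 := r ++ [false] with hr0
              set r1 := r ++ [true] with hr1
              set A := OO k (r0 ++ a') with hA
              set B := OO k (r1 ++ b') with hB
              set C := OO k (r1 ++ c') with hC
              set L := OO k (r0 ++ List.replicate m true) with hL
              set F := OO k (r1 ++ List.replicate m false) with hF
              have hsplit : B - A = (B - F) + ((F - L) + (L - A)) := by abel
              rw [hsplit, cross_add_left, cross_add_left]
              obtain ⟨p, q, hp, hq, he⟩ := diff_rep k m r1 b' c' hb' hc' hbc'
              have heCB : C - B = ((p+q)/5) • WW k r - (p/5) • UU k r := by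
                rw [hC, hB, he, hr1, conv1]
              have hFL : F - L = mu m • WW k r - mu m • UU k r := FL k r m
              have t2 : 0 < cross (F - L) (C - B) := by
                rw [heCB, hFL, cross_rep]
                have hmu := mu_pos m
                have hf : (0:ℝ) < mu m * ((p+q)/5) - p/5 * mu m := by
                  have : mu m * ((p+q)/5) - p/5 * mu m = mu m * (q/5) := by ring
                  rw [this]; positivity
                exact mul_pos hf hWU
              have t1 : 0 ≤ cross (B - F) (C - B) := by
                rcases lex_bot b' with hb0 | hb0
                · rw [hb'] at hb0
                  have : B - F = 0 := by rw [hB, hF, hb0]; abel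
                  rw [this, cross_zero_left]
                · rw [hb'] at hb0
                  exact le_of_lt (ih r1 (List.replicate m false) b' c' (by simp) hb' hc'
                    hb0 hbc')
              have t3 : 0 ≤ cross (L - A) (C - B) := by
                rcases lex_top a' with ha0 | ha0
                · rw [ha'] at ha0
                  have : L - A = 0 := by rw [hL, hA, ha0]; abel
                  rw [this, cross_zero_left]
                · rw [ha'] at ha0
                  obtain ⟨p'', q'', hp'', hq'', he''⟩ :=
                    diff_rep k m r0 a' (List.replicate m true) ha' (by simp) ha0
                  have heLA : L - A = (q''/5) • WW k r - ((p''+q'')/5) • UU k r := by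
                    rw [hL, hA, he'', hr0, conv0]
                  rw [heLA, heCB, cross_rep]
                  have hf : (0:ℝ) < (p''+q'')/5 * ((p+q)/5) - p/5 * (q''/5) := by
                    nlinarith [mul_pos hp'' hp, mul_pos hp'' hq, mul_pos hq'' hq]
                  positivity
              linarith
          | rel h2 =>
              rw [Bool.lt_iff] at h2
              simp at h2

lemma ypt_eq (s : List Bool) (b : Bool) : ypt k (s ++ [b]) = OO k (s ++ [b]) := by
  cases b <;>
    simp [ypt, List.dropLast_concat, List.getLastD_concat, OO, corner_concat, cornerStep]

end CC

/-- In the corner construction, the points `y_v` (over binary strings `v` of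
length `k+1`) are pairwise distinct and, in lexicographic order of `v`, in convex position in
counterclockwise order. -/
theorem ypt_convex_position (k : ℕ) (hk : 1 ≤ k) :
    (∀ v₁ v₂ : List Bool, v₁.length = k + 1 → v₂.length = k + 1 → v₁ ≠ v₂ →
      ypt k v₁ ≠ ypt k v₂) ∧
    (∀ v₁ v₂ v₃ : List Bool, v₁.length = k + 1 → v₂.length = k + 1 → v₃.length = k + 1 →
      List.Lex (· < ·) v₁ v₂ → List.Lex (· < ·) v₂ v₃ →
      0 < orient (ypt k v₁) (ypt k v₂) (ypt k v₃)) := by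
  have hy : ∀ v : List Bool, v.length = k + 1 → ypt k v = CC.OO k v := by
    intro v hv
    rcases List.eq_nil_or_concat v with rfl | ⟨s, b, rfl⟩
    · simp at hv
    · rw [List.concat_eq_append]; exact CC.ypt_eq k s b
  constructor
  · intro v₁ v₂ h1 h2 hne heq
    rw [hy v₁ h1, hy v₂ h2] at heq
    have hdiff : ∀ a b : List Bool, a.length = k + 1 → b.length = k + 1 →
        List.Lex (·<·) a b → CC.OO k a ≠ CC.OO k b := by
      intro a b ha hb hl hOO
      obtain ⟨p, q, hp, hq, he⟩ := CC.diff_rep k (k+1) [] a b ha hb hl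
      simp only [List.nil_append] at he
      rw [hOO, sub_self] at he
      have h0 := CC.cross_rep_U (CC.WW k []) (CC.UU k []) p q
      rw [← he, CC.cross_zero_left] at h0
      have := CC.crossWU k ([] : List Bool)
      nlinarith
    rcases CC.lex_total v₁ v₂ (h1.trans h2.symm) hne with hl | hl
    · exact hdiff v₁ v₂ h1 h2 hl heq
    · exact hdiff v₂ v₁ h2 h1 hl heq.symm
  · intro v₁ v₂ v₃ h1 h2 h3 l12 l23
    rw [hy v₁ h1, hy v₂ h2, hy v₃ h3, CC.orient_eq]
    have := CC.triple k (k+1) [] v₁ v₂ v₃ h1 h2 h3 l12 l23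
    simpa using this
end
end

section
/- In the corner construction: for every 0 ≤ j ≤ k and every binary string s of length j, one has y_{s·0^(k+1−j)} = o_s + c_j·(q_s − o_s) and y_{s·1^(k+1−j)} = o_s + c_j·(p_s − o_s), where c_j = (1/4)·(1 − 5^(j−k−1)), and 0^m (respectively 1^m) denotes the string of m zeros (respectively m ones) appended to s. -/
open Set

noncomputable section

lemma cornerStep_false (α : Pt × Pt × Pt) :
    cornerStep α false =
      (α.2.1 + (2 / 5 : ℝ) • (α.1 - α.2.1), α.2.1 + (1 / 5 : ℝ) • (α.1 - α.2.1),
        α.2.1 + (1 / 5 : ℝ) • (α.2.2 - α.2.1)) := rfl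

lemma cornerStep_true (α : Pt × Pt × Pt) :
    cornerStep α true =
      (α.2.1 + (1 / 5 : ℝ) • (α.1 - α.2.1), α.2.1 + (1 / 5 : ℝ) • (α.2.2 - α.2.1),
        α.2.1 + (2 / 5 : ℝ) • (α.2.2 - α.2.1)) := rfl

lemma corner_concat (k : ℕ) (s : List Bool) (b : Bool) :
    corner k (s ++ [b]) = cornerStep (corner k s) b := by
  simp [corner, List.foldl_append]

lemma ypt_aux (k : ℕ) : ∀ m, 1 ≤ m → ∀ s : List Bool,
    ypt k (s ++ List.replicate m false) =
      (corner k s).2.1 + ((1 / 4 : ℝ) * (1 - (1 / 5 : ℝ) ^ m)) •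
        ((corner k s).1 - (corner k s).2.1) ∧
    ypt k (s ++ List.replicate m true) =
      (corner k s).2.1 + ((1 / 4 : ℝ) * (1 - (1 / 5 : ℝ) ^ m)) •
        ((corner k s).2.2 - (corner k s).2.1) := by
  intro m hm
  induction m, hm using Nat.le_induction with
  | base =>
    intro s
    constructor <;>
    · simp only [ypt, List.replicate_one, List.dropLast_concat, List.getLastD_concat]
      norm_num
  | succ m hm ih =>
    intro s
    have h0 : s ++ List.replicate (m + 1) false = (s ++ [false]) ++ List.replicate m false := by
      simp [List.replicate_succ]
    have h1 : s ++ List.replicate (m + 1) true = (s ++ [true]) ++ List.replicate m true := by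
      simp [List.replicate_succ]
    constructor
    · rw [h0, (ih (s ++ [false])).1, corner_concat, cornerStep_false]
      match_scalars <;> ring
    · rw [h1, (ih (s ++ [true])).2, corner_concat, cornerStep_true]
      match_scalars <;> ring

/-- (Lemma 10.) In the corner construction, for every node `s` of length `j`,
`y_{s·0^(k+1−j)} = o_s + c_j·(q_s − o_s)` and `y_{s·1^(k+1−j)} = o_s + c_j·(p_s − o_s)`, where
`c_j = (1/4)(1 − 5^(j−k−1))`. -/
theorem ypt_corner_formula (k : ℕ) (hk : 1 ≤ k) (j : ℕ) (hj : j ≤ k)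
    (s : List Bool) (hs : s.length = j) :
    ypt k (s ++ List.replicate (k + 1 - j) false) =
      (corner k s).2.1 +
        ((1 / 4 : ℝ) * (1 - (5 : ℝ) ^ ((j : ℤ) - (k : ℤ) - 1))) •
          ((corner k s).1 - (corner k s).2.1) ∧
    ypt k (s ++ List.replicate (k + 1 - j) true) =
      (corner k s).2.1 +
        ((1 / 4 : ℝ) * (1 - (5 : ℝ) ^ ((j : ℤ) - (k : ℤ) - 1))) •
          ((corner k s).2.2 - (corner k s).2.1) := by
  subst hs
  have hm : 1 ≤ k + 1 - s.length := by omega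
  have h := ypt_aux k (k + 1 - s.length) hm s
  have hc : (5 : ℝ) ^ ((s.length : ℤ) - (k : ℤ) - 1) = (1 / 5 : ℝ) ^ (k + 1 - s.length) := by
    have : ((s.length : ℤ) - (k : ℤ) - 1) = -((k + 1 - s.length : ℕ) : ℤ) := by
      push_cast; omega
    rw [this, zpow_neg, zpow_natCast, one_div, inv_pow]
  rw [hc]
  exact h
end
end
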